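/- arXiv:2504.10937 — 10 statements merged into one kernel-verified Lean document; each statement's English description precedes it below -/
import Mathlib

section
/- Any two distinct locally densest subgraphs G[S] and G[S'] of a graph G are vertex-disjoint: S ∩ S' = ∅. -/
open Finset

variable {V : Type*} [Fintype V] [DecidableEq V]

/-- Number of edges of `G` with both endpoints in `S`. -/
def edgeCount (G : SimpleGraph V) [DecidableRel G.Adj] (S : Finset V) : ℕ :=
  (G.edgeFinset.filter fun e => ∀ v ∈ e, v ∈ S).card

/-- edges inside A touching U -/
def rmCount (G : SimpleGraph V) [DecidableRel G.Adj] (A U : Finset V) : ℕ :=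
  (G.edgeFinset.filter fun e => (∀ v ∈ e, v ∈ A) ∧ ∃ v ∈ e, v ∈ U).card

lemma edgeCount_split (G : SimpleGraph V) [DecidableRel G.Adj] (A U : Finset V) :
    edgeCount G (A \ U) + rmCount G A U = edgeCount G A := by
  classical
  unfold edgeCount rmCount
  rw [← Finset.card_union_of_disjoint, ← Finset.filter_or]
  · apply congrArg
    apply Finset.filter_congr
    intro e he
    constructor
    · rintro (h | h) v hv
      · exact (Finset.mem_sdiff.mp (h v hv)).1
      · exact h.1 v hv
    · intro h
      by_cases hU : ∃ v ∈ e, v ∈ U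
      · exact Or.inr ⟨h, hU⟩
      · push_neg at hU
        exact Or.inl fun v hv => Finset.mem_sdiff.mpr ⟨h v hv, hU v hv⟩
  · rw [Finset.disjoint_filter]
    rintro e _ h ⟨_, v, hv, hvU⟩
    exact (Finset.mem_sdiff.mp (h v hv)).2 hvU

lemma rm_add_le (G : SimpleGraph V) [DecidableRel G.Adj] (A B U : Finset V)
    (hU : U ⊆ A ∪ B) :
    rmCount G B (U \ A) + rmCount G A (U ∩ A) ≤ rmCount G (A ∪ B) U := by
  classical
  unfold rmCount
  rw [← Finset.card_union_of_disjoint]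
  · apply Finset.card_le_card
    intro e he
    rw [Finset.mem_union, Finset.mem_filter, Finset.mem_filter] at he
    rw [Finset.mem_filter]
    rcases he with ⟨he, h1, v, hv, hvU⟩ | ⟨he, h1, v, hv, hvU⟩
    · exact ⟨he, fun w hw => Finset.mem_union_right _ (h1 w hw),
        v, hv, (Finset.mem_sdiff.mp hvU).1⟩
    · exact ⟨he, fun w hw => Finset.mem_union_left _ (h1 w hw),
        v, hv, (Finset.mem_inter.mp hvU).1⟩
  · rw [Finset.disjoint_filter]
    rintro e _ ⟨hB, v, hv, hvU⟩ ⟨hA, _⟩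
    exact (Finset.mem_sdiff.mp hvU).2 (hA v hv)

lemma connected_union (G : SimpleGraph V) (A B : Finset V)
    (hA : (G.induce (A : Set V)).Connected) (hB : (G.induce (B : Set V)).Connected)
    (hAB : (A ∩ B).Nonempty) : (G.induce ((A ∪ B : Finset V) : Set V)).Connected := by
  rw [SimpleGraph.connected_induce_iff] at hA hB ⊢
  have h := SimpleGraph.Subgraph.connected_sup hA.preconnected hB.preconnected (by
    obtain ⟨v, hv⟩ := hAB
    rw [Finset.mem_inter] at hv
    exact ⟨v, by simpa using hv⟩)
  apply h.mono
  · constructor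
    · intro v hv
      simp only [SimpleGraph.Subgraph.verts_sup, SimpleGraph.Subgraph.induce_verts] at hv ⊢
      simpa using hv
    · intro v w hvw
      simp only [SimpleGraph.Subgraph.sup_adj, SimpleGraph.Subgraph.induce_adj] at hvw ⊢
      rcases hvw with ⟨h1, h2, h3⟩ | ⟨h1, h2, h3⟩ <;>
        simp_all
  · simp only [SimpleGraph.Subgraph.verts_sup, SimpleGraph.Subgraph.induce_verts,
      Finset.coe_union]

/-- Edge density |E(S)|/|S| of the induced subgraph G[S]. -/
noncomputable def density (G : SimpleGraph V) [DecidableRel G.Adj] (S : Finset V) : ℝ :=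
  (edgeCount G S : ℝ) / (S.card : ℝ)

/-- `G[S]` is ρ-compact: connected, and removing any nonempty `U ⊆ S`
removes at least `ρ * |U|` edges. -/
def IsCompactSub (G : SimpleGraph V) [DecidableRel G.Adj] (ρ : ℝ) (S : Finset V) : Prop :=
  0 ≤ ρ ∧ (G.induce (S : Set V)).Connected ∧
  ∀ U ⊆ S, U.Nonempty →
    ρ * (U.card : ℝ) ≤ (edgeCount G S : ℝ) - (edgeCount G (S \ U) : ℝ)

/-- `G[S]` is a locally densest subgraph: a maximal `density G S`-compact subgraph. -/
def IsLDS (G : SimpleGraph V) [DecidableRel G.Adj] (S : Finset V) : Prop :=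
  IsCompactSub G (density G S) S ∧
  ∀ S' : Finset V, S ⊂ S' → ¬ IsCompactSub G (density G S) S'

lemma density_nonneg (G : SimpleGraph V) [DecidableRel G.Adj] (S : Finset V) :
    0 ≤ density G S := div_nonneg (by positivity) (by positivity)

lemma compact_nonempty {G : SimpleGraph V} [DecidableRel G.Adj] {ρ : ℝ} {S : Finset V}
    (h : IsCompactSub G ρ S) : S.Nonempty := by
  have := h.2.1.nonempty
  obtain ⟨⟨v, hv⟩⟩ := this
  exact ⟨v, by simpa using hv⟩

lemma edgeCount_eq {G : SimpleGraph V} [DecidableRel G.Adj] {S : Finset V}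
    (h : S.Nonempty) : (edgeCount G S : ℝ) = density G S * S.card := by
  have : (S.card : ℝ) ≠ 0 := by
    simp [Finset.card_ne_zero_of_mem h.choose_spec, h.card_ne_zero]
  rw [density, div_mul_cancel₀ _ this]

lemma compact_rm {G : SimpleGraph V} [DecidableRel G.Adj] {ρ : ℝ} {S : Finset V}
    (h : IsCompactSub G ρ S) (U : Finset V) (hU : U ⊆ S) :
    ρ * (U.card : ℝ) ≤ (rmCount G S U : ℝ) := by
  rcases U.eq_empty_or_nonempty with rfl | hne
  · simpa using by positivity
  · have h2 := h.2.2 U hU hne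
    have h3 := edgeCount_split G S U
    have : (edgeCount G S : ℝ) - (edgeCount G (S \ U) : ℝ) = (rmCount G S U : ℝ) := by
      rw [← h3]; push_cast; ring
    linarith

/-- if density S' ≤ density S and S,S' are overlapping LDSs then S ⊆ S' -/
lemma union_subset {G : SimpleGraph V} [DecidableRel G.Adj] {S S' : Finset V}
    (hS : IsLDS G S) (hS' : IsLDS G S') (hint : (S ∩ S').Nonempty)
    (hle : density G S' ≤ density G S) : S ⊆ S' := by
  set ρ := density G S with hρ
  set ρ' := density G S' with hρ'
  have hcomp : IsCompactSub G ρ' (S ∪ S') := by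
    refine ⟨density_nonneg _ _, connected_union G S S' hS.1.2.1 hS'.1.2.1 hint, ?_⟩
    intro U hU hUne
    have key := rm_add_le G S S' U hU
    have h1 : ρ' * ((U \ S).card : ℝ) ≤ (rmCount G S' (U \ S) : ℝ) := by
      apply compact_rm hS'.1
      intro x hx
      rw [Finset.mem_sdiff] at hx
      rcases Finset.mem_union.mp (hU hx.1) with h | h
      · exact absurd h hx.2
      · exact h
    have h2 : ρ' * ((U ∩ S).card : ℝ) ≤ (rmCount G S (U ∩ S) : ℝ) := by
      calc ρ' * ((U ∩ S).card : ℝ) ≤ ρ * ((U ∩ S).card : ℝ) := by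
            apply mul_le_mul_of_nonneg_right hle (by positivity)
        _ ≤ _ := compact_rm hS.1 _ Finset.inter_subset_right
    have hsplit : (edgeCount G (S ∪ S') : ℝ) - (edgeCount G ((S ∪ S') \ U) : ℝ)
        = (rmCount G (S ∪ S') U : ℝ) := by
      rw [← edgeCount_split G (S ∪ S') U]; push_cast; ring
    have hcard : ((U \ S).card : ℝ) + ((U ∩ S).card : ℝ) = (U.card : ℝ) := by
      exact_mod_cast congrArg (Nat.cast : ℕ → ℝ) (Finset.card_sdiff_add_card_inter U S)
    rw [hsplit]
    have : (rmCount G S' (U \ S) : ℝ) + (rmCount G S (U ∩ S) : ℝ)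
        ≤ (rmCount G (S ∪ S') U : ℝ) := by exact_mod_cast key
    have hexp : ρ' * (U.card : ℝ)
        = ρ' * ((U \ S).card : ℝ) + ρ' * ((U ∩ S).card : ℝ) := by rw [← hcard]; ring
    linarith
  by_contra hnot
  have hss : S' ⊂ S ∪ S' := by
    refine Finset.ssubset_iff_of_subset Finset.subset_union_right |>.mpr ?_
    obtain ⟨x, hxS, hxS'⟩ := Finset.not_subset.mp hnot
    exact ⟨x, Finset.mem_union_left _ hxS, hxS'⟩
  exact hS'.2 _ hss hcomp

/-- nested LDSs: smaller has ≤ density -/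
lemma density_le_of_ssubset {G : SimpleGraph V} [DecidableRel G.Adj] {S S' : Finset V}
    (hS : IsLDS G S) (hS' : IsLDS G S') (hsub : S ⊂ S') :
    density G S ≤ density G S' := by
  have hSne := compact_nonempty hS.1
  have hS'ne := compact_nonempty hS'.1
  have hU : (S' \ S).Nonempty := by
    obtain ⟨x, hx1, hx2⟩ := Finset.exists_of_ssubset hsub
    exact ⟨x, Finset.mem_sdiff.mpr ⟨hx1, hx2⟩⟩
  have h := hS'.1.2.2 (S' \ S) Finset.sdiff_subset hU
  rw [Finset.sdiff_sdiff_self_left, Finset.inter_eq_right.mpr hsub.subset] at h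
  have e1 : (edgeCount G S' : ℝ) = density G S' * S'.card := edgeCount_eq hS'ne
  have e2 : (edgeCount G S : ℝ) = density G S * S.card := edgeCount_eq hSne
  have hcard : ((S' \ S).card : ℝ) = (S'.card : ℝ) - (S.card : ℝ) := by
    rw [Finset.card_sdiff_of_subset hsub.subset]
    have := Finset.card_le_card hsub.subset
    push_cast [this]; ring
  have hpos : (0 : ℝ) < S.card := by exact_mod_cast hSne.card_pos
  have hh : density G S' * ((S' \ S).card : ℝ)
      = density G S' * (S'.card : ℝ) - density G S' * (S.card : ℝ) := by rw [hcard]; ring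
  have hfin : density G S * (S.card : ℝ) ≤ density G S' * (S.card : ℝ) := by linarith
  exact (mul_le_mul_iff_of_pos_right hpos).mp hfin

lemma key_lemma {G : SimpleGraph V} [DecidableRel G.Adj] {S S' : Finset V}
    (hS : IsLDS G S) (hS' : IsLDS G S') (hint : (S ∩ S').Nonempty)
    (hle : density G S' ≤ density G S) (hne : S ≠ S') : False := by
  have hsub : S ⊆ S' := union_subset hS hS' hint hle
  have hss : S ⊂ S' := hsub.ssubset_of_ne hne
  have hge : density G S ≤ density G S' := density_le_of_ssubset hS hS' hss
  have hsub' : S' ⊆ S := union_subset hS' hS (by rwa [Finset.inter_comm]) hge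
  exact hss.2 hsub'

/-- The compact number of `u`: the largest ρ such that `u`
lies in a ρ-compact subgraph of `G`. -/
noncomputable def compactNum (G : SimpleGraph V) [DecidableRel G.Adj] (u : V) : ℝ :=
  sSup {ρ : ℝ | ∃ S : Finset V, u ∈ S ∧ IsCompactSub G ρ S}

/-- distinct LDSs are vertex-disjoint. -/
theorem lds_disjoint (G : SimpleGraph V) [DecidableRel G.Adj]
    (S S' : Finset V) (hS : IsLDS G S) (hS' : IsLDS G S') (hne : S ≠ S') :
    S ∩ S' = ∅ := by
  by_contra h
  have hint : (S ∩ S').Nonempty := Finset.nonempty_iff_ne_empty.mpr h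
  rcases le_total (density G S') (density G S) with hle | hle
  · exact key_lemma hS hS' hint hle hne
  · exact key_lemma hS' hS (by rwa [Finset.inter_comm]) hle hne.symm
end

section
/- If G[S] is a locally densest subgraph of G, then every vertex u ∈ S has compact number φ(u) = density(G[S]). -/
open Finset

variable {V : Type*} [Fintype V] [DecidableEq V]

/-- Edges inside `S` with at least one endpoint in `U`. -/
def remEdges (G : SimpleGraph V) [DecidableRel G.Adj] (S U : Finset V) : Finset (Sym2 V) :=
  G.edgeFinset.filter fun e => (∀ v ∈ e, v ∈ S) ∧ ∃ v ∈ e, v ∈ U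

lemma edgeCount_empty (G : SimpleGraph V) [DecidableRel G.Adj] : edgeCount G ∅ = 0 := by
  simp only [edgeCount, Finset.card_eq_zero, Finset.filter_eq_empty_iff]
  intro e he
  intro h
  induction e with
  | _ x y => exact absurd (h x (by simp)) (by simp)

lemma edgeCount_sdiff_add (G : SimpleGraph V) [DecidableRel G.Adj] (S U : Finset V) :
    edgeCount G (S \ U) + (remEdges G S U).card = edgeCount G S := by
  have h1 : edgeCount G (S \ U) =
      ((G.edgeFinset.filter fun e => ∀ v ∈ e, v ∈ S).filter fun e => ∀ v ∈ e, v ∉ U).card := by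
    rw [edgeCount, Finset.filter_filter]
    congr 1
    apply Finset.filter_congr
    intro e _
    constructor
    · intro h; exact ⟨fun v hv => (Finset.mem_sdiff.mp (h v hv)).1,
        fun v hv => (Finset.mem_sdiff.mp (h v hv)).2⟩
    · intro h v hv; exact Finset.mem_sdiff.mpr ⟨h.1 v hv, h.2 v hv⟩
  have h2 : (remEdges G S U).card =
      ((G.edgeFinset.filter fun e => ∀ v ∈ e, v ∈ S).filter fun e => ¬ ∀ v ∈ e, v ∉ U).card := by
    rw [remEdges, Finset.filter_filter]
    congr 1
    apply Finset.filter_congr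
    intro e _
    push_neg
    tauto
  rw [h1, h2, edgeCount]
  exact Finset.card_filter_add_card_filter_not _

lemma edgeCount_sdiff_real (G : SimpleGraph V) [DecidableRel G.Adj] (S U : Finset V) :
    (edgeCount G S : ℝ) - (edgeCount G (S \ U) : ℝ) = ((remEdges G S U).card : ℝ) := by
  have := edgeCount_sdiff_add G S U
  push_cast [← this]
  ring

/-- Key lemma: any ρ-compact subgraph meeting an LDS has ρ ≤ density. -/
lemma rho_le_density (G : SimpleGraph V) [DecidableRel G.Adj]
    (S : Finset V) (h : IsLDS G S) (u : V) (hu : u ∈ S)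
    (ρ : ℝ) (T : Finset V) (huT : u ∈ T) (hc : IsCompactSub G ρ T) :
    ρ ≤ density G S := by
  set d := density G S with hd
  have hS := h.1
  have hSne : S.Nonempty := by
    have := hS.2.1.nonempty
    obtain ⟨⟨x, hx⟩⟩ := this
    exact ⟨x, by simpa using hx⟩
  have hScard : (0 : ℝ) < (S.card : ℝ) := by
    exact_mod_cast Finset.card_pos.mpr hSne
  have hdS : d * (S.card : ℝ) = (edgeCount G S : ℝ) := by
    rw [hd, density, div_mul_cancel₀]
    exact ne_of_gt hScard
  by_contra hlt
  push_neg at hlt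
  by_cases hTS : T ⊆ S
  · -- T ⊆ S: density of T is at most d, but ρ ≤ density T
    have hTne : T.Nonempty := ⟨u, huT⟩
    have hTcard : (0 : ℝ) < (T.card : ℝ) := by
      exact_mod_cast Finset.card_pos.mpr hTne
    have h1 : ρ * (T.card : ℝ) ≤ (edgeCount G T : ℝ) := by
      have := hc.2.2 T (subset_refl T) hTne
      rwa [Finset.sdiff_self, edgeCount_empty, Nat.cast_zero, sub_zero] at this
    have h2 : (edgeCount G T : ℝ) ≤ d * (T.card : ℝ) := by
      by_cases hne : (S \ T).Nonempty
      · have := hS.2.2 (S \ T) (Finset.sdiff_subset) hne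
        rw [Finset.sdiff_sdiff_self_left, Finset.inter_eq_right.mpr hTS] at this
        have hcard : ((S \ T).card : ℝ) = (S.card : ℝ) - (T.card : ℝ) := by
          exact_mod_cast Finset.cast_card_sdiff hTS
        rw [hcard] at this
        nlinarith [this, hdS]
      · have : T = S := by
          apply Finset.Subset.antisymm hTS
          intro x hx
          by_contra hxT
          exact hne ⟨x, Finset.mem_sdiff.mpr ⟨hx, hxT⟩⟩
        rw [this, hdS]
      -- done
    nlinarith
  · -- T ⊄ S: S ∪ T is a strictly larger d-compact subgraph, contradiction
    have hss : S ⊂ S ∪ T := by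
      constructor
      · exact Finset.subset_union_left
      · intro hsub
        exact hTS (fun x hx => hsub (Finset.mem_union_right S hx))
    apply h.2 (S ∪ T) hss
    refine ⟨hS.1, ?_, ?_⟩
    · rw [Finset.coe_union]
      exact SimpleGraph.induce_union_connected hS.2.1.preconnected hc.2.1.preconnected ⟨u, hu, huT⟩
    · intro U hU hUne
      rw [edgeCount_sdiff_real]
      set U₁ := U ∩ S with hU₁
      set U₂ := U \ S with hU₂
      have hU₂T : U₂ ⊆ T := by
        intro x hx
        have hx' := Finset.mem_sdiff.mp hx
        rcases Finset.mem_union.mp (hU hx'.1) with h | h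
        · exact absurd h hx'.2
        · exact h
      have hcards : (U₁.card : ℝ) + (U₂.card : ℝ) = (U.card : ℝ) := by
        exact_mod_cast Finset.card_inter_add_card_sdiff U S
      -- bound for U₁
      have hb1 : d * (U₁.card : ℝ) ≤ ((remEdges G S U₁).card : ℝ) := by
        by_cases hne : U₁.Nonempty
        · have := hS.2.2 U₁ Finset.inter_subset_right hne
          rwa [edgeCount_sdiff_real] at this
        · rw [Finset.not_nonempty_iff_eq_empty] at hne
          rw [hne]
          simp [hS.1]
      have hb2 : d * (U₂.card : ℝ) ≤ ((remEdges G T U₂).card : ℝ) := by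
        by_cases hne : U₂.Nonempty
        · have h1 := hc.2.2 U₂ hU₂T hne
          rw [edgeCount_sdiff_real] at h1
          have : d * (U₂.card : ℝ) ≤ ρ * (U₂.card : ℝ) := by
            apply mul_le_mul_of_nonneg_right (le_of_lt hlt)
            positivity
          linarith
        · rw [Finset.not_nonempty_iff_eq_empty] at hne
          rw [hne]
          simp [hS.1]
      -- the two removed-edge sets are disjoint subsets of remEdges G (S ∪ T) U
      have hsub1 : remEdges G S U₁ ⊆ remEdges G (S ∪ T) U := by
        intro e he
        rw [remEdges, Finset.mem_filter] at he ⊢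
        obtain ⟨hee, hall, v, hv, hvU⟩ := he
        exact ⟨hee, fun w hw => Finset.mem_union_left T (hall w hw),
          v, hv, (Finset.mem_inter.mp hvU).1⟩
      have hsub2 : remEdges G T U₂ ⊆ remEdges G (S ∪ T) U := by
        intro e he
        rw [remEdges, Finset.mem_filter] at he ⊢
        obtain ⟨hee, hall, v, hv, hvU⟩ := he
        exact ⟨hee, fun w hw => Finset.mem_union_right S (hall w hw),
          v, hv, (Finset.mem_sdiff.mp hvU).1⟩
      have hdisj : Disjoint (remEdges G S U₁) (remEdges G T U₂) := by
        rw [Finset.disjoint_left]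
        intro e he1 he2
        rw [remEdges, Finset.mem_filter] at he1 he2
        obtain ⟨_, hall, _⟩ := he1
        obtain ⟨_, _, v, hv, hvU⟩ := he2
        exact (Finset.mem_sdiff.mp hvU).2 (hall v hv)
      have hcard : (remEdges G S U₁).card + (remEdges G T U₂).card
          ≤ (remEdges G (S ∪ T) U).card := by
        rw [← Finset.card_union_of_disjoint hdisj]
        exact Finset.card_le_card (Finset.union_subset hsub1 hsub2)
      have hcard' : ((remEdges G S U₁).card : ℝ) + ((remEdges G T U₂).card : ℝ)
          ≤ ((remEdges G (S ∪ T) U).card : ℝ) := by exact_mod_cast hcard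
      calc d * (U.card : ℝ) = d * (U₁.card : ℝ) + d * (U₂.card : ℝ) := by
            rw [← hcards]; ring
        _ ≤ ((remEdges G S U₁).card : ℝ) + ((remEdges G T U₂).card : ℝ) := by
            linarith
        _ ≤ ((remEdges G (S ∪ T) U).card : ℝ) := hcard'

/-- each vertex of an LDS has compact number equal to its density. -/
theorem lds_compactNum_eq_density (G : SimpleGraph V) [DecidableRel G.Adj]
    (S : Finset V) (h : IsLDS G S) :
    ∀ u ∈ S, compactNum G u = density G S := by
  intro u hu
  have hmem : density G S ∈ {ρ : ℝ | ∃ S : Finset V, u ∈ S ∧ IsCompactSub G ρ S} :=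
    ⟨S, hu, h.1⟩
  have hub : ∀ ρ ∈ {ρ : ℝ | ∃ S : Finset V, u ∈ S ∧ IsCompactSub G ρ S}, ρ ≤ density G S := by
    rintro ρ ⟨T, huT, hc⟩
    exact rho_le_density G S h u hu ρ T huT hc
  exact le_antisymm (csSup_le ⟨density G S, hmem⟩ hub) (le_csSup ⟨density G S, hub⟩ hmem)
end

section
/- Let (r*, α*) be an optimal solution to the convex program CP(G): minimize Σ_{u∈V} r_u² subject to r_u = Σ_{(u,v)∈E} α_{u,v} for all u, α_{u,v} + α_{v,u} ≥ 1 and α_{u,v}, α_{v,u} ≥ 0 for all edges (u,v). Then for every edge (x,y) ∈ E with r*_x > r*_y, we have α*_{x,y} = 0. -/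
open Finset

variable {V : Type*} [Fintype V] [DecidableEq V]

/-- Feasibility for the convex program CP(G). -/
def CPFeasible (G : SimpleGraph V) [DecidableRel G.Adj] (r : V → ℝ) (α : V → V → ℝ) : Prop :=
  (∀ u, r u = ∑ v ∈ G.neighborFinset u, α u v) ∧
  (∀ u v, G.Adj u v → 1 ≤ α u v + α v u) ∧
  (∀ u v, G.Adj u v → 0 ≤ α u v)

/-- Optimality for CP(G): feasible and minimizes `∑ u, (r u)^2`. -/
def CPOptimal (G : SimpleGraph V) [DecidableRel G.Adj] (r : V → ℝ) (α : V → V → ℝ) : Prop :=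
  CPFeasible G r α ∧
  ∀ r' α', CPFeasible G r' α' → ∑ u, (r u) ^ 2 ≤ ∑ u, (r' u) ^ 2

/-!
If `α x y > 0` while `r x > r y`, moving a small amount `ε` of the share of the edge `xy`
from `x` to `y` keeps the solution feasible and brings the loads of `x` and `y` closer,
which strictly decreases `∑ r_u²`.
-/

section ShareShift

variable (G : SimpleGraph V) [DecidableRel G.Adj]

def load (α : V → V → ℝ) (u : V) : ℝ :=
  ∑ v ∈ G.neighborFinset u, α u v

def shiftShare (α : V → V → ℝ) (x y : V) (ε : ℝ) (u v : V) : ℝ :=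
  α u v + (if u = y ∧ v = x then ε else 0) - (if u = x ∧ v = y then ε else 0)

variable {G}

lemma sum_neighborFinset_ite_and {x y : V} (hxy : G.Adj x y) (u : V) (c : ℝ) :
    ∑ v ∈ G.neighborFinset u, (if u = x ∧ v = y then c else 0) = if u = x then c else 0 := by
  by_cases hu : u = x
  · subst hu
    simp [hxy]
  · simp [hu]

lemma load_shiftShare (α : V → V → ℝ) {x y : V} (hxy : G.Adj x y) (ε : ℝ) (u : V) :
    load G (shiftShare α x y ε) u
      = load G α u + (if u = y then ε else 0) - (if u = x then ε else 0) := by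
  simp only [load, shiftShare, sum_add_distrib, sum_sub_distrib,
    sum_neighborFinset_ite_and hxy, sum_neighborFinset_ite_and hxy.symm]

lemma cpFeasible_shiftShare {r : V → ℝ} {α : V → V → ℝ} (h : CPFeasible G r α)
    {x y : V} (hxy : G.Adj x y) {ε : ℝ} (hε : 0 ≤ ε) (hεα : ε ≤ α x y) :
    CPFeasible G (load G (shiftShare α x y ε)) (shiftShare α x y ε) := by
  obtain ⟨-, hcover, hnonneg⟩ := h
  refine ⟨fun u => rfl, fun u v huv => ?_, fun u v huv => ?_⟩
  · have := hcover u v huv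
    simp only [shiftShare, and_comm (a := v = _)]
    linarith
  · have hgain : 0 ≤ if u = y ∧ v = x then ε else 0 := ite_nonneg hε le_rfl
    have hloss : (if u = x ∧ v = y then ε else 0) ≤ α u v := by
      split_ifs with hedge
      · obtain ⟨rfl, rfl⟩ := hedge
        exact hεα
      · exact hnonneg u v huv
    simp only [shiftShare]
    linarith

end ShareShift

/-- `(a - ε)² + (b + ε)² = a² + b² - 2ε (a - b - ε)`. -/
lemma sum_sq_shift_lt {r : V → ℝ} {x y : V} (hxy : x ≠ y) {ε : ℝ} (hε : 0 < ε)
    (hlt : ε < r x - r y) :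
    ∑ u, (r u + (if u = y then ε else 0) - (if u = x then ε else 0)) ^ 2 < ∑ u, r u ^ 2 := by
  have hy : y ∈ univ.erase x := mem_erase.2 ⟨hxy.symm, mem_univ y⟩
  rw [← add_sum_erase _ _ (mem_univ x), ← add_sum_erase _ _ hy,
    ← add_sum_erase _ _ (mem_univ x), ← add_sum_erase _ _ hy]
  have hrest : ∑ u ∈ (univ.erase x).erase y,
      (r u + (if u = y then ε else 0) - (if u = x then ε else 0)) ^ 2
        = ∑ u ∈ (univ.erase x).erase y, r u ^ 2 :=
    sum_congr rfl fun u hu => by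
      obtain ⟨huy, hux, -⟩ := mem_erase.1 hu |>.imp_right mem_erase.1
      simp [huy, hux]
  simp only [hrest, if_neg hxy, if_neg hxy.symm, if_true, add_zero, sub_zero]
  nlinarith

/-- in an optimal CP solution, an edge assigns no weight to
its endpoint with the larger r-value. -/
theorem cp_optimal_alpha_zero (G : SimpleGraph V) [DecidableRel G.Adj]
    (r : V → ℝ) (α : V → V → ℝ) (hopt : CPOptimal G r α) :
    ∀ x y : V, G.Adj x y → r x > r y → α x y = 0 := by
  intro x y hxy hr
  obtain ⟨hfeas, hmin⟩ := hopt
  by_contra hne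
  have hpos : 0 < α x y := (hfeas.2.2 x y hxy).lt_of_ne' hne
  set ε := min (α x y) ((r x - r y) / 2)
  have hε : 0 < ε := lt_min hpos (by linarith)
  have hle := hmin _ _ (cpFeasible_shiftShare hfeas hxy hε.le (min_le_left _ _))
  have hload : ∀ u, load G (shiftShare α x y ε) u
      = r u + (if u = y then ε else 0) - (if u = x then ε else 0) := fun u => by
    rw [load_shiftShare α hxy, load, ← hfeas.1]
  simp only [hload] at hle
  have hεlt : ε < r x - r y := by linarith [min_le_right (α x y) ((r x - r y) / 2)]
  exact (sum_sq_shift_lt hxy.ne hε hεlt).not_ge hle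
end

section
/- Let (r*, α*) be an optimal solution to the convex program CP(G). For any vertex u ∈ V, define X = {v : r*_v > r*_u} and Y = {v : r*_v = r*_u}. Then the induced subgraph G[X ∪ Y] has the property that removing any nonempty subset Q ⊆ X ∪ Y removes at least r*_u · |Q| edges from G[X ∪ Y]. -/
open Finset

variable {V : Type*} [Fintype V] [DecidableEq V]

def indG (G : SimpleGraph V) [DecidableRel G.Adj] (T : Finset V) : SimpleGraph V where
  Adj v w := G.Adj v w ∧ v ∈ T ∧ w ∈ T
  symm := ⟨fun v w ⟨h, hv, hw⟩ => ⟨h.symm, hw, hv⟩⟩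
  loopless := ⟨fun v h => G.loopless.irrefl v h.1⟩

instance (G : SimpleGraph V) [DecidableRel G.Adj] (T : Finset V) :
    DecidableRel (indG G T).Adj :=
  fun _ _ => inferInstanceAs (Decidable (_ ∧ _ ∧ _))

lemma twice_edgeCount (G : SimpleGraph V) [DecidableRel G.Adj] (T : Finset V) :
    ∑ v, ∑ w, (if G.Adj v w ∧ v ∈ T ∧ w ∈ T then (1:ℝ) else 0) = 2 * edgeCount G T := by
  have h1 : (indG G T).edgeFinset = G.edgeFinset.filter (fun e => ∀ v ∈ e, v ∈ T) := by
    ext e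
    refine Sym2.ind (fun a b => ?_) e
    simp only [SimpleGraph.mem_edgeFinset, Finset.mem_filter, SimpleGraph.mem_edgeSet,
      Sym2.mem_iff]
    simp only [indG]
    constructor
    · rintro ⟨h, ha, hb⟩
      exact ⟨h, fun v hv => by rcases hv with rfl | rfl <;> assumption⟩
    · rintro ⟨h, hall⟩
      exact ⟨h, hall a (Or.inl rfl), hall b (Or.inr rfl)⟩
  have h3 : edgeCount G T = (indG G T).edgeFinset.card := by rw [edgeCount, h1]
  have h4 : ∀ v, ∑ w, (if G.Adj v w ∧ v ∈ T ∧ w ∈ T then (1:ℝ) else 0)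
      = ((indG G T).degree v : ℝ) := by
    intro v
    rw [Finset.sum_boole]
    congr 1
    rw [SimpleGraph.degree]
    congr 1
    ext w
    simp only [Finset.mem_filter, Finset.mem_univ, true_and, SimpleGraph.mem_neighborFinset]
    simp [indG]
  rw [Finset.sum_congr rfl fun v _ => h4 v, h3]
  rw [← Nat.cast_sum]
  rw [SimpleGraph.sum_degrees_eq_twice_card_edges]
  push_cast
  ring

lemma sum_sq_one (r r' : V → ℝ) (v : V) (h : ∀ x, x ≠ v → r' x = r x) :
    ∑ x, r' x ^ 2 = ∑ x, r x ^ 2 - r v ^ 2 + r' v ^ 2 := by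
  rw [← Finset.sum_erase_add univ _ (Finset.mem_univ v),
      ← Finset.sum_erase_add univ (fun x => r x ^ 2) (Finset.mem_univ v)]
  have he : ∑ x ∈ univ.erase v, r' x ^ 2 = ∑ x ∈ univ.erase v, r x ^ 2 :=
    Finset.sum_congr rfl fun x hx => by rw [h x (Finset.ne_of_mem_erase hx)]
  rw [he]; ring

lemma sum_sq_two (r r' : V → ℝ) (v w : V) (hvw : v ≠ w)
    (h : ∀ x, x ≠ v → x ≠ w → r' x = r x) :
    ∑ x, r' x ^ 2 = ∑ x, r x ^ 2 - r v ^ 2 - r w ^ 2 + r' v ^ 2 + r' w ^ 2 := by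
  rw [← Finset.sum_erase_add univ _ (Finset.mem_univ v),
      ← Finset.sum_erase_add univ (fun x => r x ^ 2) (Finset.mem_univ v),
      ← Finset.sum_erase_add (univ.erase v) _
        (Finset.mem_erase.2 ⟨Ne.symm hvw, Finset.mem_univ w⟩),
      ← Finset.sum_erase_add (univ.erase v) (fun x => r x ^ 2)
        (Finset.mem_erase.2 ⟨Ne.symm hvw, Finset.mem_univ w⟩)]
  have he : ∑ x ∈ (univ.erase v).erase w, r' x ^ 2 = ∑ x ∈ (univ.erase v).erase w, r x ^ 2 :=
    Finset.sum_congr rfl fun x hx => by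
      rw [h x (Finset.ne_of_mem_erase (Finset.mem_of_mem_erase hx)) (Finset.ne_of_mem_erase hx)]
  rw [he]; ring

lemma alpha_eq_zero {G : SimpleGraph V} [DecidableRel G.Adj] {r : V → ℝ} {α : V → V → ℝ}
    (hopt : CPOptimal G r α) {v w : V} (hadj : G.Adj v w) (hlt : r w < r v) :
    α v w = 0 := by
  by_contra hne
  obtain ⟨⟨hr, hpair, hnn⟩, hmin⟩ := hopt
  have hpos : 0 < α v w := lt_of_le_of_ne (hnn v w hadj) (Ne.symm hne)
  set ε := min (α v w) ((r v - r w) / 2) with hεdef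
  have hεpos : 0 < ε := lt_min hpos (by linarith)
  have hε1 : ε ≤ α v w := min_le_left _ _
  have hε2 : ε ≤ (r v - r w) / 2 := min_le_right _ _
  have hne' : v ≠ w := hadj.ne
  set α' : V → V → ℝ := fun x y =>
    if x = v ∧ y = w then α v w - ε else if x = w ∧ y = v then α w v + ε else α x y with hα'
  set r' : V → ℝ := fun x => ∑ y ∈ G.neighborFinset x, α' x y with hr'
  have hαvw : α' v w = α v w - ε := by simp [hα']
  have hαwv : α' w v = α w v + ε := by
    have : ¬(w = v ∧ v = w) := fun h => hne' h.2
    simp [hα', this]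
  have hαother : ∀ x y, ¬(x = v ∧ y = w) → ¬(x = w ∧ y = v) → α' x y = α x y := by
    intro x y h1 h2; simp only [hα']; rw [if_neg h1, if_neg h2]
  have hfeas' : CPFeasible G r' α' := by
    refine ⟨fun x => rfl, ?_, ?_⟩
    · intro x y hxy
      by_cases h1 : x = v ∧ y = w
      · obtain ⟨rfl, rfl⟩ := h1
        rw [hαvw, hαwv]; have := hpair x y hxy; linarith
      · by_cases h2 : x = w ∧ y = v
        · obtain ⟨rfl, rfl⟩ := h2
          rw [hαvw, hαwv]; have := hpair y x hxy.symm; linarith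
        · rw [hαother x y h1 h2, hαother y x
            (fun h => h2 ⟨h.2, h.1⟩) (fun h => h1 ⟨h.2, h.1⟩)]
          exact hpair x y hxy
    · intro x y hxy
      by_cases h1 : x = v ∧ y = w
      · obtain ⟨rfl, rfl⟩ := h1; rw [hαvw]; linarith
      · by_cases h2 : x = w ∧ y = v
        · obtain ⟨rfl, rfl⟩ := h2; rw [hαwv]; have := hnn x y hxy; linarith
        · rw [hαother x y h1 h2]; exact hnn x y hxy
  have hrv : r' v = r v - ε := by
    have hstep : ∀ y ∈ G.neighborFinset v, α' v y = α v y - (if y = w then ε else 0) := by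
      intro y _
      by_cases hyw : y = w
      · subst hyw; rw [hαvw, if_pos rfl]
      · rw [hαother v y (fun h => hyw h.2) (fun h => hne' h.1), if_neg hyw]; ring
    have : r' v = ∑ y ∈ G.neighborFinset v, (α v y - if y = w then ε else 0) :=
      Finset.sum_congr rfl hstep
    rw [this, Finset.sum_sub_distrib, Finset.sum_ite_eq' _ w _,
      if_pos ((SimpleGraph.mem_neighborFinset G v w).2 hadj)]
    have := hr v; linarith
  have hrw : r' w = r w + ε := by
    have hstep : ∀ y ∈ G.neighborFinset w, α' w y = α w y + (if y = v then ε else 0) := by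
      intro y _
      by_cases hyv : y = v
      · subst hyv; rw [hαwv, if_pos rfl]
      · rw [hαother w y (fun h => hne' h.1.symm) (fun h => hyv h.2), if_neg hyv]; ring
    have : r' w = ∑ y ∈ G.neighborFinset w, (α w y + if y = v then ε else 0) :=
      Finset.sum_congr rfl hstep
    rw [this, Finset.sum_add_distrib, Finset.sum_ite_eq' _ v _,
      if_pos ((SimpleGraph.mem_neighborFinset G w v).2 hadj.symm)]
    have := hr w; linarith
  have hrx : ∀ x, x ≠ v → x ≠ w → r' x = r x := by
    intro x hxv hxw
    have : r' x = ∑ y ∈ G.neighborFinset x, α x y :=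
      Finset.sum_congr rfl fun y _ =>
        hαother x y (fun h => hxv h.1) (fun h => hxw h.1)
    rw [this, ← hr x]
  have hle := hmin r' α' hfeas'
  have hsum := sum_sq_two r r' v w hne' hrx
  rw [hrv, hrw] at hsum
  nlinarith [mul_pos hεpos (sub_pos.2 hlt), mul_le_mul_of_nonneg_left hε2 hεpos.le]

lemma pair_le_one {G : SimpleGraph V} [DecidableRel G.Adj] {r : V → ℝ} {α : V → V → ℝ}
    (hopt : CPOptimal G r α) {v w : V} (hadj : G.Adj v w) (hpos : 0 < α v w) :
    α v w + α w v ≤ 1 := by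
  by_contra hgt
  push_neg at hgt
  obtain ⟨⟨hr, hpair, hnn⟩, hmin⟩ := hopt
  have hne' : v ≠ w := hadj.ne
  have hrv : 0 < r v := by
    have : α v w ≤ r v := by
      rw [hr v]
      exact Finset.single_le_sum (fun y hy => hnn v y ((SimpleGraph.mem_neighborFinset G v y).1 hy))
        ((SimpleGraph.mem_neighborFinset G v w).2 hadj)
    linarith
  set ε := min (α v w) (min (α v w + α w v - 1) (r v)) with hεdef
  have hεpos : 0 < ε := lt_min hpos (lt_min (by linarith) hrv)
  have hε1 : ε ≤ α v w := min_le_left _ _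
  have hε2 : ε ≤ α v w + α w v - 1 := le_trans (min_le_right _ _) (min_le_left _ _)
  have hε3 : ε ≤ r v := le_trans (min_le_right _ _) (min_le_right _ _)
  set α' : V → V → ℝ := fun x y => if x = v ∧ y = w then α v w - ε else α x y with hα'
  set r' : V → ℝ := fun x => ∑ y ∈ G.neighborFinset x, α' x y with hr'
  have hαvw : α' v w = α v w - ε := by simp [hα']
  have hαother : ∀ x y, ¬(x = v ∧ y = w) → α' x y = α x y := by
    intro x y h1; simp only [hα']; rw [if_neg h1]
  have hfeas' : CPFeasible G r' α' := by
    refine ⟨fun x => rfl, ?_, ?_⟩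
    · intro x y hxy
      by_cases h1 : x = v ∧ y = w
      · obtain ⟨rfl, rfl⟩ := h1
        rw [hαvw, hαother y x (fun h => hne' h.1.symm)]
        linarith
      · by_cases h2 : y = v ∧ x = w
        · obtain ⟨rfl, rfl⟩ := h2
          rw [hαvw, hαother x y (fun h => hne' h.2)]
          linarith
        · rw [hαother x y h1, hαother y x h2]
          exact hpair x y hxy
    · intro x y hxy
      by_cases h1 : x = v ∧ y = w
      · obtain ⟨rfl, rfl⟩ := h1; rw [hαvw]; linarith
      · rw [hαother x y h1]; exact hnn x y hxy
  have hrv' : r' v = r v - ε := by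
    have hstep : ∀ y ∈ G.neighborFinset v, α' v y = α v y - (if y = w then ε else 0) := by
      intro y _
      by_cases hyw : y = w
      · subst hyw; rw [hαvw, if_pos rfl]
      · rw [hαother v y (fun h => hyw h.2), if_neg hyw]; ring
    have : r' v = ∑ y ∈ G.neighborFinset v, (α v y - if y = w then ε else 0) :=
      Finset.sum_congr rfl hstep
    rw [this, Finset.sum_sub_distrib, Finset.sum_ite_eq' _ w _,
      if_pos ((SimpleGraph.mem_neighborFinset G v w).2 hadj)]
    have := hr v; linarith
  have hrx : ∀ x, x ≠ v → r' x = r x := by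
    intro x hxv
    have : r' x = ∑ y ∈ G.neighborFinset x, α x y :=
      Finset.sum_congr rfl fun y _ => hαother x y (fun h => hxv h.1)
    rw [this, ← hr x]
  have hle := hmin r' α' hfeas'
  have hsum := sum_sq_one r r' v hrx
  rw [hrv'] at hsum
  nlinarith

lemma pair_eq_one {G : SimpleGraph V} [DecidableRel G.Adj] {r : V → ℝ} {α : V → V → ℝ}
    (hopt : CPOptimal G r α) {v w : V} (hadj : G.Adj v w) :
    α v w + α w v = 1 := by
  have h1 := hopt.1.2.1 v w hadj
  refine le_antisymm ?_ h1
  rcases lt_or_ge 0 (α v w) with h | h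
  · exact pair_le_one hopt hadj h
  · have h0 : α v w = 0 := le_antisymm h (hopt.1.2.2 v w hadj)
    have h2 : 0 < α w v := by linarith
    have := pair_le_one hopt hadj.symm h2
    linarith

lemma alpha_le_one {G : SimpleGraph V} [DecidableRel G.Adj] {r : V → ℝ} {α : V → V → ℝ}
    (hopt : CPOptimal G r α) {v w : V} (hadj : G.Adj v w) :
    α v w ≤ 1 := by
  have := pair_eq_one hopt hadj
  have := hopt.1.2.2 w v hadj.symm
  linarith

/-- removing any nonempty `Q ⊆ X ∪ Y` removes at least
`r u * |Q|` edges of `G[X ∪ Y]`. -/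
theorem cp_optimal_level_set_compact (G : SimpleGraph V) [DecidableRel G.Adj]
    (r : V → ℝ) (α : V → V → ℝ) (hopt : CPOptimal G r α) (u : V) :
    ∀ Q ⊆ Finset.univ.filter (fun v => r u ≤ r v), Q.Nonempty →
      r u * (Q.card : ℝ) ≤
        (edgeCount G (Finset.univ.filter (fun v => r u ≤ r v)) : ℝ) -
        (edgeCount G ((Finset.univ.filter (fun v => r u ≤ r v)) \ Q) : ℝ) := by
  intro Q hQ _hQne
  set S := Finset.univ.filter (fun v => r u ≤ r v) with hSdef
  obtain ⟨hr, hpair, hnn⟩ := hopt.1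
  have hQS : ∀ v ∈ Q, v ∈ S := fun v hv => hQ hv
  have hrS : ∀ v ∈ S, r u ≤ r v := fun v hv => (Finset.mem_filter.1 hv).2
  -- step 1
  have h1 : r u * (Q.card : ℝ) ≤ ∑ v ∈ Q, r v := by
    calc r u * (Q.card : ℝ) = ∑ _v ∈ Q, r u := by rw [Finset.sum_const, nsmul_eq_mul]; ring
    _ ≤ ∑ v ∈ Q, r v := Finset.sum_le_sum fun v hv => hrS v (hQS v hv)
  -- r v as a sum over all w, restricted to S
  have hrv : ∀ v ∈ Q, r v = ∑ w, (if G.Adj v w ∧ w ∈ S then α v w else 0) := by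
    intro v hv
    rw [hr v, SimpleGraph.neighborFinset_eq_filter, Finset.sum_filter]
    refine Finset.sum_congr rfl fun w _ => ?_
    by_cases ha : G.Adj v w
    · by_cases hw : w ∈ S
      · simp [ha, hw]
      · have hwu : r w < r u := by
          have : ¬ (r u ≤ r w) := by simpa [hSdef] using hw
          linarith [not_le.1 this]
        have hvu : r u ≤ r v := hrS v (hQS v hv)
        rw [if_pos ha, if_neg (fun h => hw h.2)]
        exact alpha_eq_zero hopt ha (by linarith)
    · simp [ha]
  -- per-vertex split of 2 r v
  have hA : ∀ v ∈ Q, 2 * r v =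
      ∑ w, ((if v ∈ Q ∧ G.Adj v w ∧ w ∈ Q then 2 * α v w else 0) +
            (if v ∈ Q ∧ G.Adj v w ∧ w ∈ S ∧ w ∉ Q then 2 * α v w else 0)) := by
    intro v hv
    rw [hrv v hv, Finset.mul_sum]
    refine Finset.sum_congr rfl fun w _ => ?_
    by_cases ha : G.Adj v w
    · by_cases hw : w ∈ Q
      · have hs : w ∈ S := hQS w hw
        simp [ha, hw, hs, hv]
      · by_cases hs : w ∈ S <;> simp [ha, hw, hs, hv]
    · simp [ha]
  have hAQ : 2 * ∑ v ∈ Q, r v =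
      (∑ v, ∑ w, (if v ∈ Q ∧ G.Adj v w ∧ w ∈ Q then 2 * α v w else 0)) +
      (∑ v, ∑ w, (if v ∈ Q ∧ G.Adj v w ∧ w ∈ S ∧ w ∉ Q then 2 * α v w else 0)) := by
    rw [Finset.mul_sum, Finset.sum_congr rfl hA,
      Finset.sum_subset (Finset.subset_univ Q)
        (fun v _ hv => Finset.sum_eq_zero fun w _ => by simp [hv])]
    simp [Finset.sum_add_distrib]
  -- symmetrization for the Q-Q part
  have hsym1 : ∑ v, ∑ w, (if v ∈ Q ∧ G.Adj v w ∧ w ∈ Q then α v w else 0)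
      = ∑ v, ∑ w, (if v ∈ Q ∧ G.Adj v w ∧ w ∈ Q then α w v else 0) := by
    rw [Finset.sum_comm]
    refine Finset.sum_congr rfl fun v _ => Finset.sum_congr rfl fun w _ => ?_
    exact if_congr ⟨fun ⟨a, b, c⟩ => ⟨c, b.symm, a⟩, fun ⟨a, b, c⟩ => ⟨c, b.symm, a⟩⟩ rfl rfl
  have hQQ : ∑ v, ∑ w, (if v ∈ Q ∧ G.Adj v w ∧ w ∈ Q then 2 * α v w else 0)
      = ∑ v, ∑ w, (if v ∈ Q ∧ G.Adj v w ∧ w ∈ Q then (1:ℝ) else 0) := by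
    calc ∑ v, ∑ w, (if v ∈ Q ∧ G.Adj v w ∧ w ∈ Q then 2 * α v w else 0)
        = ∑ v, ∑ w, ((if v ∈ Q ∧ G.Adj v w ∧ w ∈ Q then α v w else 0) +
                     (if v ∈ Q ∧ G.Adj v w ∧ w ∈ Q then α v w else 0)) :=
          Finset.sum_congr rfl fun v _ => Finset.sum_congr rfl fun w _ => by
            split_ifs <;> ring
      _ = (∑ v, ∑ w, (if v ∈ Q ∧ G.Adj v w ∧ w ∈ Q then α v w else 0)) +
          (∑ v, ∑ w, (if v ∈ Q ∧ G.Adj v w ∧ w ∈ Q then α v w else 0)) := by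
            simp [Finset.sum_add_distrib]
      _ = (∑ v, ∑ w, (if v ∈ Q ∧ G.Adj v w ∧ w ∈ Q then α v w else 0)) +
          (∑ v, ∑ w, (if v ∈ Q ∧ G.Adj v w ∧ w ∈ Q then α w v else 0)) := by
            nth_rewrite 2 [hsym1]; rfl
      _ = ∑ v, ∑ w, ((if v ∈ Q ∧ G.Adj v w ∧ w ∈ Q then α v w else 0) +
                     (if v ∈ Q ∧ G.Adj v w ∧ w ∈ Q then α w v else 0)) := by
            simp [Finset.sum_add_distrib]
      _ = ∑ v, ∑ w, (if v ∈ Q ∧ G.Adj v w ∧ w ∈ Q then (1:ℝ) else 0) := by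
            refine Finset.sum_congr rfl fun v _ => Finset.sum_congr rfl fun w _ => ?_
            by_cases h : v ∈ Q ∧ G.Adj v w ∧ w ∈ Q
            · simp only [if_pos h]; exact pair_eq_one hopt h.2.1
            · simp [h]
  -- bound for the Q-(S\Q) part
  have hsym2 : ∑ v, ∑ w, (if v ∈ Q ∧ G.Adj v w ∧ w ∈ S ∧ w ∉ Q then (1:ℝ) else 0)
      = ∑ v, ∑ w, (if (v ∈ S ∧ v ∉ Q) ∧ G.Adj v w ∧ w ∈ Q then (1:ℝ) else 0) := by
    rw [Finset.sum_comm]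
    refine Finset.sum_congr rfl fun v _ => Finset.sum_congr rfl fun w _ => ?_
    exact if_congr ⟨fun ⟨a, b, c, d⟩ => ⟨⟨c, d⟩, b.symm, a⟩,
      fun ⟨⟨c, d⟩, b, a⟩ => ⟨a, b.symm, c, d⟩⟩ rfl rfl
  have hC1 : ∑ v, ∑ w, (if v ∈ Q ∧ G.Adj v w ∧ w ∈ S ∧ w ∉ Q then 2 * α v w else 0)
      ≤ (∑ v, ∑ w, (if v ∈ Q ∧ G.Adj v w ∧ w ∈ S ∧ w ∉ Q then (1:ℝ) else 0)) +
        (∑ v, ∑ w, (if (v ∈ S ∧ v ∉ Q) ∧ G.Adj v w ∧ w ∈ Q then (1:ℝ) else 0)) := by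
    rw [← hsym2]
    have : ∀ v w : V, (if v ∈ Q ∧ G.Adj v w ∧ w ∈ S ∧ w ∉ Q then 2 * α v w else 0)
        ≤ (if v ∈ Q ∧ G.Adj v w ∧ w ∈ S ∧ w ∉ Q then (1:ℝ) else 0) +
          (if v ∈ Q ∧ G.Adj v w ∧ w ∈ S ∧ w ∉ Q then (1:ℝ) else 0) := by
      intro v w
      by_cases h : v ∈ Q ∧ G.Adj v w ∧ w ∈ S ∧ w ∉ Q
      · simp only [if_pos h]
        have := alpha_le_one hopt h.2.1; linarith
      · simp [h]
    calc ∑ v, ∑ w, (if v ∈ Q ∧ G.Adj v w ∧ w ∈ S ∧ w ∉ Q then 2 * α v w else 0)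
        ≤ ∑ v, ∑ w, ((if v ∈ Q ∧ G.Adj v w ∧ w ∈ S ∧ w ∉ Q then (1:ℝ) else 0) +
                     (if v ∈ Q ∧ G.Adj v w ∧ w ∈ S ∧ w ∉ Q then (1:ℝ) else 0)) :=
          Finset.sum_le_sum fun v _ => Finset.sum_le_sum fun w _ => this v w
      _ = _ := by simp [Finset.sum_add_distrib]
  -- RHS identity
  have hRHS : 2 * (edgeCount G S : ℝ) - 2 * (edgeCount G (S \ Q) : ℝ)
      = (∑ v, ∑ w, (if v ∈ Q ∧ G.Adj v w ∧ w ∈ Q then (1:ℝ) else 0)) +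
        ((∑ v, ∑ w, (if v ∈ Q ∧ G.Adj v w ∧ w ∈ S ∧ w ∉ Q then (1:ℝ) else 0)) +
         (∑ v, ∑ w, (if (v ∈ S ∧ v ∉ Q) ∧ G.Adj v w ∧ w ∈ Q then (1:ℝ) else 0))) := by
    rw [← twice_edgeCount G S, ← twice_edgeCount G (S \ Q), ← Finset.sum_sub_distrib]
    simp only [← Finset.sum_add_distrib]
    refine Finset.sum_congr rfl fun v _ => ?_
    rw [← Finset.sum_sub_distrib]
    refine Finset.sum_congr rfl fun w _ => ?_
    by_cases ha : G.Adj v w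
    · by_cases hvQ : v ∈ Q
      · have hvS : v ∈ S := hQS v hvQ
        by_cases hwQ : w ∈ Q
        · have hwS : w ∈ S := hQS w hwQ
          simp [ha, hvQ, hwQ, hvS, hwS, Finset.mem_sdiff]
        · by_cases hwS : w ∈ S <;> simp [ha, hvQ, hwQ, hvS, hwS, Finset.mem_sdiff]
      · by_cases hwQ : w ∈ Q
        · have hwS : w ∈ S := hQS w hwQ
          by_cases hvS : v ∈ S <;> simp [ha, hvQ, hwQ, hvS, hwS, Finset.mem_sdiff]
        · by_cases hvS : v ∈ S <;> by_cases hwS : w ∈ S <;>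
            simp [ha, hvQ, hwQ, hvS, hwS, Finset.mem_sdiff]
    · simp [ha]
  linarith
end

section
/- Let (r*, α*) be an optimal solution to the convex program CP(G). Then for every vertex u ∈ V, r*_u equals the compact number φ(u) of u, i.e., the largest ρ such that u is contained in a ρ-compact subgraph of G. -/
open Finset

variable {V : Type*} [Fintype V] [DecidableEq V]

set_option linter.unusedSectionVars false
section Stab
variable (G : SimpleGraph V) [DecidableRel G.Adj] (r : V → ℝ) (α : V → V → ℝ)

lemma r_nonneg (hf : CPFeasible G r α) (u : V) : 0 ≤ r u := by
  rw [hf.1 u]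
  exact Finset.sum_nonneg fun v hv => hf.2.2 u v (by simpa using hv)

lemma alpha_le_r (hf : CPFeasible G r α) {u v : V} (h : G.Adj u v) : α u v ≤ r u := by
  rw [hf.1 u]
  exact Finset.single_le_sum (fun w hw => hf.2.2 u w (by simpa using hw))
    (by simpa using h)

lemma stab_sum_eq (hopt : CPOptimal G r α) {u v : V} (h : G.Adj u v) :
    α u v + α v u = 1 := by
  obtain ⟨hf, hmin⟩ := hopt
  by_contra hne
  have hgt : 1 < α u v + α v u := lt_of_le_of_ne (hf.2.1 u v h) (Ne.symm hne)
  -- one of the two is positive; wlog via a local claim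
  have key : ∀ u v : V, G.Adj u v → 1 < α u v + α v u → 0 < α u v → False := by
    intro u v h hgt hpos
    have hru : 0 < r u := lt_of_lt_of_le hpos (alpha_le_r G r α hf h)
    set ε := min (α u v) (α u v + α v u - 1) with hε
    have hε0 : 0 < ε := lt_min hpos (by linarith)
    have hεa : ε ≤ α u v := min_le_left _ _
    have hεs : ε ≤ α u v + α v u - 1 := min_le_right _ _
    have hεr : ε ≤ r u := hεa.trans (alpha_le_r G r α hf h)
    set α' : V → V → ℝ := fun x y => if x = u ∧ y = v then α u v - ε else α x y with hα'
    set r' : V → ℝ := fun w => ∑ z ∈ G.neighborFinset w, α' w z with hr'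
    have huv : u ≠ v := h.ne
    have hα'same : ∀ x y, x ≠ u → α' x y = α x y := by
      intro x y hx; simp [hα', hx]
    have hα'u : ∀ y, y ≠ v → α' u y = α u y := by
      intro y hy; simp [hα', hy]
    have hr'same : ∀ w, w ≠ u → r' w = r w := by
      intro w hw
      rw [hr', hf.1 w]
      exact Finset.sum_congr rfl fun z _ => hα'same w z hw
    have hr'u : r' u = r u - ε := by
      have : ∀ z ∈ G.neighborFinset u, α' u z = α u z - (if z = v then ε else 0) := by
        intro z _
        by_cases hz : z = v
        · subst hz; simp [hα']
        · simp [hα', hz]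
      rw [show r' u = ∑ z ∈ G.neighborFinset u, α' u z from rfl,
        Finset.sum_congr rfl this, Finset.sum_sub_distrib, ← hf.1 u,
        Finset.sum_ite_eq' (G.neighborFinset u) v (fun _ => ε)]
      simp [h]
    have hfeas : CPFeasible G r' α' := by
      refine ⟨fun w => rfl, ?_, ?_⟩
      · intro x y hxy
        by_cases hx : x = u ∧ y = v
        · obtain ⟨rfl, rfl⟩ := hx
          have : α' x y = α x y - ε := by simp [hα']
          have h2 : α' y x = α y x := hα'same y x huv.symm
          rw [this, h2]; linarith
        · by_cases hy : y = u ∧ x = v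
          · obtain ⟨rfl, rfl⟩ := hy
            have h1 : α' x y = α x y := hα'same x y huv.symm
            have h2 : α' y x = α y x - ε := by simp [hα']
            rw [h1, h2]
            have := hf.2.1 y x hxy.symm
            linarith
          · have h1 : α' x y = α x y := by
              by_cases hx1 : x = u
              · subst hx1; exact hα'u y (fun hv => hx ⟨rfl, hv⟩)
              · exact hα'same x y hx1
            have h2 : α' y x = α y x := by
              by_cases hy1 : y = u
              · subst hy1
                exact hα'u x (fun hv => hy ⟨rfl, hv⟩)
              · exact hα'same y x hy1
            rw [h1, h2]; exact hf.2.1 x y hxy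
      · intro x y hxy
        by_cases hx : x = u ∧ y = v
        · obtain ⟨rfl, rfl⟩ := hx
          have : α' x y = α x y - ε := by simp [hα']
          rw [this]; linarith
        · have h1 : α' x y = α x y := by
            by_cases hx1 : x = u
            · subst hx1; exact hα'u y (fun hv => hx ⟨rfl, hv⟩)
            · exact hα'same x y hx1
          rw [h1]; exact hf.2.2 x y hxy
    have hlt : ∑ w, (r' w) ^ 2 < ∑ w, (r w) ^ 2 := by
      rw [← Finset.add_sum_erase _ _ (Finset.mem_univ u),
          ← Finset.add_sum_erase _ (fun w => (r w)^2) (Finset.mem_univ u)]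
      have heq : ∑ w ∈ Finset.univ.erase u, (r' w) ^ 2
          = ∑ w ∈ Finset.univ.erase u, (r w) ^ 2 :=
        Finset.sum_congr rfl fun w hw => by
          rw [hr'same w (Finset.ne_of_mem_erase hw)]
      rw [heq, hr'u]
      have : (r u - ε)^2 < (r u)^2 := by nlinarith
      linarith
    exact absurd (hmin r' α' hfeas) (not_le.mpr hlt)
  rcases lt_or_ge 0 (α u v) with hp | hp
  · exact key u v h hgt hp
  · have : 0 < α v u := by
      have := hf.2.2 u v h; linarith
    exact key v u h.symm (by linarith) this

end Stab
section Stab2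
set_option linter.unusedSectionVars false
variable (G : SimpleGraph V) [DecidableRel G.Adj] (r : V → ℝ) (α : V → V → ℝ)

/-- At an optimum, if `r u < r v` then `α v u = 0`. -/
lemma stab_zero (hopt : CPOptimal G r α) {u v : V} (h : G.Adj u v) (hr : r u < r v) :
    α v u = 0 := by
  obtain ⟨hf, hmin⟩ := hopt
  by_contra hne
  have hpos : 0 < α v u := lt_of_le_of_ne (hf.2.2 v u h.symm) (Ne.symm hne)
  set ε := min (α v u) ((r v - r u) / 2) with hε
  have hε0 : 0 < ε := lt_min hpos (by linarith)
  have hεa : ε ≤ α v u := min_le_left _ _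
  have hεs : ε ≤ (r v - r u) / 2 := min_le_right _ _
  have huv : u ≠ v := h.ne
  set α' : V → V → ℝ := fun x y =>
    if x = u ∧ y = v then α u v + ε else if x = v ∧ y = u then α v u - ε else α x y with hα'
  set r' : V → ℝ := fun w => ∑ z ∈ G.neighborFinset w, α' w z with hr'
  have hα'same : ∀ x y, x ≠ u → x ≠ v → α' x y = α x y := by
    intro x y hx1 hx2; simp [hα', hx1, hx2]
  have hα'u : ∀ y, y ≠ v → α' u y = α u y := by
    intro y hy; simp [hα', hy, huv]
  have hα'v : ∀ y, y ≠ u → α' v y = α v y := by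
    intro y hy; simp [hα', hy, huv.symm]
  have hα'uv : α' u v = α u v + ε := by simp [hα']
  have hα'vu : α' v u = α v u - ε := by simp [hα', huv.symm]
  have hr'same : ∀ w, w ≠ u → w ≠ v → r' w = r w := by
    intro w hw1 hw2
    rw [show r' w = ∑ z ∈ G.neighborFinset w, α' w z from rfl, hf.1 w]
    exact Finset.sum_congr rfl fun z _ => hα'same w z hw1 hw2
  have hr'u : r' u = r u + ε := by
    have h1 : ∀ z ∈ G.neighborFinset u, α' u z = α u z + (if z = v then ε else 0) := by
      intro z _
      by_cases hz : z = v
      · subst hz; simp [hα'uv]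
      · simp [hα'u z hz, hz]
    rw [show r' u = ∑ z ∈ G.neighborFinset u, α' u z from rfl,
      Finset.sum_congr rfl h1, Finset.sum_add_distrib, ← hf.1 u,
      Finset.sum_ite_eq' (G.neighborFinset u) v (fun _ => ε)]
    simp [h]
  have hr'v : r' v = r v - ε := by
    have h1 : ∀ z ∈ G.neighborFinset v, α' v z = α v z - (if z = u then ε else 0) := by
      intro z _
      by_cases hz : z = u
      · subst hz; simp [hα'vu]
      · simp [hα'v z hz, hz]
    rw [show r' v = ∑ z ∈ G.neighborFinset v, α' v z from rfl,
      Finset.sum_congr rfl h1, Finset.sum_sub_distrib, ← hf.1 v,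
      Finset.sum_ite_eq' (G.neighborFinset v) u (fun _ => ε)]
    simp [h.symm]
  have hα'eq : ∀ x y, ¬(x = u ∧ y = v) → ¬(x = v ∧ y = u) → α' x y = α x y := by
    intro x y h1 h2; simp [hα', h1, h2]
  have hfeas : CPFeasible G r' α' := by
    refine ⟨fun w => rfl, ?_, ?_⟩
    · intro x y hxy
      by_cases hx : x = u ∧ y = v
      · obtain ⟨rfl, rfl⟩ := hx
        rw [hα'uv, hα'vu]
        have := hf.2.1 x y hxy; linarith
      · by_cases hy : x = v ∧ y = u
        · obtain ⟨rfl, rfl⟩ := hy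
          rw [hα'uv, hα'vu]
          have := hf.2.1 y x hxy.symm; linarith
        · have hx' : ¬(y = v ∧ x = u) := fun ⟨a, b⟩ => hx ⟨b, a⟩
          have hy' : ¬(y = u ∧ x = v) := fun ⟨a, b⟩ => hy ⟨b, a⟩
          rw [hα'eq x y hx hy, hα'eq y x hy' hx']
          exact hf.2.1 x y hxy
    · intro x y hxy
      by_cases hx : x = u ∧ y = v
      · obtain ⟨rfl, rfl⟩ := hx
        rw [hα'uv]
        have := hf.2.2 x y hxy; linarith
      · by_cases hy : x = v ∧ y = u
        · obtain ⟨rfl, rfl⟩ := hy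
          rw [hα'vu]; linarith
        · rw [hα'eq x y hx hy]
          exact hf.2.2 x y hxy
  have hlt : ∑ w, (r' w) ^ 2 < ∑ w, (r w) ^ 2 := by
    have hvmem : v ∈ Finset.univ.erase u := Finset.mem_erase.mpr ⟨huv.symm, Finset.mem_univ v⟩
    rw [← Finset.add_sum_erase _ _ (Finset.mem_univ u),
        ← Finset.add_sum_erase _ (fun w => (r w)^2) (Finset.mem_univ u),
        ← Finset.add_sum_erase _ _ hvmem,
        ← Finset.add_sum_erase _ (fun w => (r w)^2) hvmem]
    have heq : ∑ w ∈ (Finset.univ.erase u).erase v, (r' w) ^ 2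
        = ∑ w ∈ (Finset.univ.erase u).erase v, (r w) ^ 2 :=
      Finset.sum_congr rfl fun w hw => by
        rw [hr'same w (Finset.ne_of_mem_erase (Finset.mem_of_mem_erase hw))
          (Finset.ne_of_mem_erase hw)]
    rw [heq, hr'u, hr'v]
    nlinarith
  exact absurd (hmin r' α' hfeas) (not_le.mpr hlt)

end Stab2
section Count
set_option linter.unusedSectionVars false
variable (G : SimpleGraph V) [DecidableRel G.Adj]

/-- Ordered pairs of adjacent vertices, both in `S`. -/
def pairsWithin (S : Finset V) : Finset (V × V) :=
  Finset.univ.filter fun p => G.Adj p.1 p.2 ∧ p.1 ∈ S ∧ p.2 ∈ S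

/-- Ordered pairs of adjacent vertices in `S`, at least one in `U`. -/
def pairsTouch (S U : Finset V) : Finset (V × V) :=
  Finset.univ.filter fun p => G.Adj p.1 p.2 ∧ p.1 ∈ S ∧ p.2 ∈ S ∧ (p.1 ∈ U ∨ p.2 ∈ U)

lemma pairsWithin_card (S : Finset V) :
    (pairsWithin G S).card = 2 * edgeCount G S := by
  classical
  rw [edgeCount, Finset.card_eq_sum_card_fiberwise
    (f := fun p : V × V => Sym2.mk p.1 p.2)
    (t := G.edgeFinset.filter fun e => ∀ v ∈ e, v ∈ S) ?_]
  · rw [Finset.sum_const_nat (m := 2) ?_, Nat.mul_comm]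
    intro e he
    induction e with
    | _ a b =>
      simp only [Finset.mem_filter, SimpleGraph.mem_edgeFinset,
        SimpleGraph.mem_edgeSet] at he
      obtain ⟨hab, hmem⟩ := he
      have haS : a ∈ S := hmem a (by simp)
      have hbS : b ∈ S := hmem b (by simp)
      have hne : a ≠ b := hab.ne
      have : (pairsWithin G S).filter (fun p => Sym2.mk p.1 p.2 = s(a, b))
          = {(a, b), (b, a)} := by
        ext p
        obtain ⟨x, y⟩ := p
        simp only [Finset.mem_filter, pairsWithin, Finset.mem_univ, true_and,
          Finset.mem_insert, Finset.mem_singleton, Sym2.eq_iff, Prod.mk.injEq]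
        constructor
        · rintro ⟨-, (⟨rfl, rfl⟩ | ⟨rfl, rfl⟩)⟩
          · left; exact ⟨rfl, rfl⟩
          · right; exact ⟨rfl, rfl⟩
        · rintro (⟨rfl, rfl⟩ | ⟨rfl, rfl⟩)
          · exact ⟨⟨hab, haS, hbS⟩, Or.inl ⟨rfl, rfl⟩⟩
          · exact ⟨⟨hab.symm, hbS, haS⟩, Or.inr ⟨rfl, rfl⟩⟩
      rw [this, Finset.card_insert_of_notMem (by simp [hne]), Finset.card_singleton]
  · intro p hp
    obtain ⟨x, y⟩ := p
    simp only [Finset.mem_coe, pairsWithin, Finset.mem_filter, Finset.mem_univ, true_and] at hp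
    simp only [Finset.mem_coe, Finset.mem_filter, SimpleGraph.mem_edgeFinset, SimpleGraph.mem_edgeSet]
    exact ⟨hp.1, by intro v hv; rcases Sym2.mem_iff.mp hv with rfl | rfl
                    exacts [hp.2.1, hp.2.2]⟩

lemma pairsWithin_split (S U : Finset V) :
    (pairsWithin G S).card = (pairsTouch G S U).card + (pairsWithin G (S \ U)).card := by
  classical
  rw [← Finset.card_filter_add_card_filter_not
    (p := fun p : V × V => p.1 ∈ U ∨ p.2 ∈ U) (s := pairsWithin G S)]
  have h1 : (pairsWithin G S).filter (fun p => p.1 ∈ U ∨ p.2 ∈ U) = pairsTouch G S U := by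
    ext p
    simp only [pairsWithin, pairsTouch, Finset.mem_filter, Finset.mem_univ, true_and]
    tauto
  have h2 : (pairsWithin G S).filter (fun p => ¬(p.1 ∈ U ∨ p.2 ∈ U)) = pairsWithin G (S \ U) := by
    ext p
    simp only [pairsWithin, Finset.mem_filter, Finset.mem_univ, true_and, Finset.mem_sdiff]
    tauto
  rw [h1, h2]

lemma pairsTouch_card_real (S U : Finset V) :
    ((pairsTouch G S U).card : ℝ)
      = 2 * ((edgeCount G S : ℝ) - (edgeCount G (S \ U) : ℝ)) := by
  have h := pairsWithin_split G S U
  rw [pairsWithin_card, pairsWithin_card] at h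
  have : (2 * edgeCount G S : ℝ) = ((pairsTouch G S U).card : ℝ) + 2 * edgeCount G (S \ U) := by
    exact_mod_cast congrArg (Nat.cast : ℕ → ℝ) h
  linarith

end Count
section Sums
set_option linter.unusedSectionVars false
variable (G : SimpleGraph V) [DecidableRel G.Adj] (r : V → ℝ) (α : V → V → ℝ)

lemma sum_pairs_fst (hf : CPFeasible G r α) (U : Finset V) :
    ∑ p ∈ Finset.univ.filter (fun p : V × V => G.Adj p.1 p.2 ∧ p.1 ∈ U), α p.1 p.2
      = ∑ v ∈ U, r v := by
  rw [Finset.sum_filter, Fintype.sum_prod_type]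
  have hinner : ∀ a : V,
      (∑ b : V, if G.Adj a b ∧ a ∈ U then α a b else 0)
        = if a ∈ U then r a else 0 := by
    intro a
    by_cases ha : a ∈ U
    · simp only [ha, and_true, if_true]
      rw [hf.1 a, SimpleGraph.neighborFinset_eq_filter, Finset.sum_filter]
    · simp [ha]
  rw [Finset.sum_congr rfl fun a _ => hinner a]
  simp [Finset.sum_ite_mem]

lemma sum_pairs_restrict (S U : Finset V)
    (h0 : ∀ a b, G.Adj a b → a ∈ U → b ∉ S → α a b = 0) :
    ∑ p ∈ Finset.univ.filter (fun p : V × V => G.Adj p.1 p.2 ∧ p.1 ∈ U), α p.1 p.2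
      = ∑ p ∈ Finset.univ.filter
          (fun p : V × V => G.Adj p.1 p.2 ∧ p.1 ∈ U ∧ p.2 ∈ S), α p.1 p.2 := by
  symm
  apply Finset.sum_subset
  · intro p hp
    simp only [Finset.mem_filter, Finset.mem_univ, true_and] at hp ⊢
    exact ⟨hp.1, hp.2.1⟩
  · intro p hp hnp
    simp only [Finset.mem_filter, Finset.mem_univ, true_and] at hp hnp
    exact h0 p.1 p.2 hp.1 hp.2 (fun h => hnp ⟨hp.1, hp.2, h⟩)

lemma sum_g_eq (S U : Finset V) (hUS : U ⊆ S) :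
    ∑ p ∈ pairsTouch G S U,
      ((if p.1 ∈ U then α p.1 p.2 else 0) + (if p.2 ∈ U then α p.2 p.1 else 0))
      = 2 * ∑ p ∈ Finset.univ.filter
          (fun p : V × V => G.Adj p.1 p.2 ∧ p.1 ∈ U ∧ p.2 ∈ S), α p.1 p.2 := by
  rw [Finset.sum_add_distrib]
  have h1 : ∑ p ∈ pairsTouch G S U, (if p.1 ∈ U then α p.1 p.2 else 0)
      = ∑ p ∈ Finset.univ.filter
          (fun p : V × V => G.Adj p.1 p.2 ∧ p.1 ∈ U ∧ p.2 ∈ S), α p.1 p.2 := by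
    rw [← Finset.sum_filter]
    apply Finset.sum_congr _ (fun p _ => rfl)
    ext p
    simp only [pairsTouch, Finset.mem_filter, Finset.mem_univ, true_and]
    constructor
    · rintro ⟨⟨h1, h2, h3, h4⟩, h5⟩; exact ⟨h1, h5, h3⟩
    · rintro ⟨h1, h2, h3⟩; exact ⟨⟨h1, hUS h2, h3, Or.inl h2⟩, h2⟩
  have h2 : ∑ p ∈ pairsTouch G S U, (if p.2 ∈ U then α p.2 p.1 else 0)
      = ∑ p ∈ pairsTouch G S U, (if p.1 ∈ U then α p.1 p.2 else 0) := by
    apply Finset.sum_nbij' (fun p => Prod.swap p) (fun p => Prod.swap p)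
    · intro p hp
      simp only [pairsTouch, Finset.mem_filter, Finset.mem_univ, true_and] at hp ⊢
      exact ⟨hp.1.symm, hp.2.2.1, hp.2.1, hp.2.2.2.symm⟩
    · intro p hp
      simp only [pairsTouch, Finset.mem_filter, Finset.mem_univ, true_and] at hp ⊢
      exact ⟨hp.1.symm, hp.2.2.1, hp.2.1, hp.2.2.2.symm⟩
    · intro p _; rfl
    · intro p _; rfl
    · intro p _; rfl
  rw [h1, h2, h1, two_mul]

end Sums
section DirA
set_option linter.unusedSectionVars false
variable (G : SimpleGraph V) [DecidableRel G.Adj] (r : V → ℝ) (α : V → V → ℝ)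

lemma compact_le_r (hopt : CPOptimal G r α) {u : V} {ρ : ℝ} {S : Finset V}
    (hc : IsCompactSub G ρ S) (hu : u ∈ S) : ρ ≤ r u := by
  have hf := hopt.1
  by_contra hlt
  push_neg at hlt
  set T := S.filter (fun v => r v < ρ) with hT
  have hTS : T ⊆ S := Finset.filter_subset _ _
  have huT : u ∈ T := Finset.mem_filter.mpr ⟨hu, hlt⟩
  have hTne : T.Nonempty := ⟨u, huT⟩
  have hcomp := hc.2.2 T hTS hTne
  -- pointwise lower bound on `g` over `pairsTouch G S T`
  have hpt : ∀ p ∈ pairsTouch G S T,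
      (1 : ℝ) ≤ (if p.1 ∈ T then α p.1 p.2 else 0) + (if p.2 ∈ T then α p.2 p.1 else 0) := by
    rintro ⟨a, b⟩ hp
    simp only [pairsTouch, Finset.mem_filter, Finset.mem_univ, true_and] at hp
    obtain ⟨hab, haS, hbS, hor⟩ := hp
    by_cases haT : a ∈ T
    · by_cases hbT : b ∈ T
      · simp only [haT, hbT, if_true]
        exact hf.2.1 a b hab
      · -- b ∈ S \ T so ρ ≤ r b, and r a < ρ
        have hrb : ρ ≤ r b := by
          by_contra hb
          exact hbT (Finset.mem_filter.mpr ⟨hbS, not_le.mp hb⟩)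
        have hra : r a < ρ := (Finset.mem_filter.mp haT).2
        have hz : α b a = 0 := stab_zero G r α hopt hab (lt_of_lt_of_le hra hrb)
        have h1 := hf.2.1 a b hab
        simp only [haT, hbT, if_true, if_false]
        linarith
    · have hbT : b ∈ T := hor.resolve_left haT
      have hrb : ρ ≤ r a := by
        by_contra hb
        exact haT (Finset.mem_filter.mpr ⟨haS, not_le.mp hb⟩)
      have hra : r b < ρ := (Finset.mem_filter.mp hbT).2
      have hz : α a b = 0 := stab_zero G r α hopt hab.symm (lt_of_lt_of_le hra hrb)
      have h1 := hf.2.1 a b hab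
      simp only [haT, hbT, if_true, if_false]
      linarith
  have hcard : ((pairsTouch G S T).card : ℝ)
      ≤ ∑ p ∈ pairsTouch G S T,
          ((if p.1 ∈ T then α p.1 p.2 else 0) + (if p.2 ∈ T then α p.2 p.1 else 0)) := by
    calc ((pairsTouch G S T).card : ℝ) = ∑ _p ∈ pairsTouch G S T, (1 : ℝ) := by simp
    _ ≤ _ := Finset.sum_le_sum hpt
  rw [sum_g_eq G α S T hTS] at hcard
  have hsub : ∑ p ∈ Finset.univ.filter
        (fun p : V × V => G.Adj p.1 p.2 ∧ p.1 ∈ T ∧ p.2 ∈ S), α p.1 p.2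
      ≤ ∑ v ∈ T, r v := by
    rw [← sum_pairs_fst G r α hf T]
    apply Finset.sum_le_sum_of_subset_of_nonneg
    · intro p hp
      simp only [Finset.mem_filter, Finset.mem_univ, true_and] at hp ⊢
      exact ⟨hp.1, hp.2.1⟩
    · intro p hp _
      simp only [Finset.mem_filter, Finset.mem_univ, true_and] at hp
      exact hf.2.2 p.1 p.2 hp.1
  have hTsum : ∑ v ∈ T, r v < ρ * T.card := by
    calc ∑ v ∈ T, r v < ∑ _v ∈ T, ρ :=
      Finset.sum_lt_sum_of_nonempty hTne (fun v hv => (Finset.mem_filter.mp hv).2)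
    _ = ρ * T.card := by rw [Finset.sum_const, nsmul_eq_mul, mul_comm]
  rw [pairsTouch_card_real] at hcard
  linarith
end DirA
section DirB
set_option linter.unusedSectionVars false
variable (G : SimpleGraph V) [DecidableRel G.Adj] (r : V → ℝ) (α : V → V → ℝ)

lemma reachable_of_walk_support {s : Set V} {a b : V} (p : G.Walk a b)
    (hsup : ∀ x ∈ p.support, x ∈ s) (ha : a ∈ s) (hb : b ∈ s) :
    (G.induce s).Reachable ⟨a, ha⟩ ⟨b, hb⟩ := by
  induction p with
  | nil => exact SimpleGraph.Reachable.refl _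
  | @cons a c b h p ih =>
    have hc : c ∈ s := hsup c (by simp)
    have hadj : (G.induce s).Adj ⟨a, ha⟩ ⟨c, hc⟩ := by
      simp only [SimpleGraph.comap_adj]
      exact h
    exact SimpleGraph.Reachable.trans hadj.reachable
      (ih (fun x hx => hsup x (by simp [hx])) hc hb)

lemma exists_compact_of_opt (hopt : CPOptimal G r α) (u : V) :
    ∃ S : Finset V, u ∈ S ∧ IsCompactSub G (r u) S := by
  classical
  have hf := hopt.1
  set S₀ : Finset V := Finset.univ.filter (fun v => r u ≤ r v) with hS₀
  set S : Finset V := Finset.univ.filter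
    (fun v => ∃ p : G.Walk u v, ∀ x ∈ p.support, x ∈ S₀) with hS
  have hu0 : u ∈ S₀ := by simp [hS₀]
  have huS : u ∈ S := by
    simp only [hS, Finset.mem_filter, Finset.mem_univ, true_and]
    exact ⟨SimpleGraph.Walk.nil, fun x hx => by
      simp only [SimpleGraph.Walk.support_nil, List.mem_singleton] at hx
      subst hx; exact hu0⟩
  have hSS0 : S ⊆ S₀ := by
    intro v hv
    simp only [hS, Finset.mem_filter, Finset.mem_univ, true_and] at hv
    obtain ⟨p, hp⟩ := hv
    exact hp v p.end_mem_support
  have hclose : ∀ v ∈ S, ∀ w, G.Adj v w → w ∈ S₀ → w ∈ S := by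
    intro v hv w hvw hw0
    simp only [hS, Finset.mem_filter, Finset.mem_univ, true_and] at hv ⊢
    obtain ⟨p, hp⟩ := hv
    refine ⟨p.concat hvw, fun x hx => ?_⟩
    rw [SimpleGraph.Walk.support_concat, List.mem_append] at hx
    rcases hx with hx | hx
    · exact hp x hx
    · simp only [List.mem_singleton] at hx; subst hx; exact hw0
  have hzero : ∀ a b, G.Adj a b → a ∈ S → b ∉ S → α a b = 0 := by
    intro a b hab ha hb
    have hb0 : b ∉ S₀ := fun h => hb (hclose a ha b hab h)
    have hrb : r b < r u := by
      by_contra h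
      exact hb0 (by simp only [hS₀, Finset.mem_filter, Finset.mem_univ, true_and]
                    exact not_lt.mp h)
    have hra : r u ≤ r a := by
      have := hSS0 ha
      simpa [hS₀] using this
    exact stab_zero G r α hopt hab.symm (lt_of_lt_of_le hrb hra)
  refine ⟨S, huS, r_nonneg G r α hf u, ?_, ?_⟩
  · -- connectedness
    rw [SimpleGraph.connected_iff]
    constructor
    · rintro ⟨a, ha⟩ ⟨b, hb⟩
      have haS : a ∈ S := by simpa using ha
      have hbS : b ∈ S := by simpa using hb
      -- walks from u with support inside S
      have key : ∀ c ∈ S, ∃ p : G.Walk u c, ∀ x ∈ p.support, x ∈ S := by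
        intro c hc
        simp only [hS, Finset.mem_filter, Finset.mem_univ, true_and] at hc
        obtain ⟨p, hp⟩ := hc
        refine ⟨p, fun x hx => ?_⟩
        simp only [hS, Finset.mem_filter, Finset.mem_univ, true_and]
        exact ⟨p.takeUntil x hx, fun y hy =>
          hp y (SimpleGraph.Walk.support_takeUntil_subset p hx hy)⟩
      obtain ⟨pa, hpa⟩ := key a haS
      obtain ⟨pb, hpb⟩ := key b hbS
      have huS' : (u : V) ∈ (S : Set V) := by simpa using huS
      have r1 := reachable_of_walk_support G pa (fun x hx => by simpa using hpa x hx)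
        huS' ha
      have r2 := reachable_of_walk_support G pb (fun x hx => by simpa using hpb x hx)
        huS' hb
      exact r1.symm.trans r2
    · exact ⟨⟨u, by simpa using huS⟩⟩
  · -- compactness inequality
    intro U hUS hUne
    -- each vertex of U has r v ≥ r u
    have hrU : ∀ v ∈ U, r u ≤ r v := by
      intro v hv
      have := hSS0 (hUS hv)
      simpa [hS₀] using this
    have h1 : r u * (U.card : ℝ) ≤ ∑ v ∈ U, r v := by
      calc r u * (U.card : ℝ) = ∑ _v ∈ U, r u := by
            rw [Finset.sum_const, nsmul_eq_mul, mul_comm]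
      _ ≤ ∑ v ∈ U, r v := Finset.sum_le_sum hrU
    have h2 : ∑ v ∈ U, r v = ∑ p ∈ Finset.univ.filter
        (fun p : V × V => G.Adj p.1 p.2 ∧ p.1 ∈ U ∧ p.2 ∈ S), α p.1 p.2 := by
      rw [← sum_pairs_fst G r α hf U, sum_pairs_restrict G α S U]
      intro a b hab ha hb
      exact hzero a b hab (hUS ha) hb
    have hpt : ∀ p ∈ pairsTouch G S U,
        (if p.1 ∈ U then α p.1 p.2 else 0) + (if p.2 ∈ U then α p.2 p.1 else 0) ≤ 1 := by
      rintro ⟨a, b⟩ hp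
      simp only [pairsTouch, Finset.mem_filter, Finset.mem_univ, true_and] at hp
      obtain ⟨hab, haS, hbS, hor⟩ := hp
      have hsum := stab_sum_eq G r α hopt hab
      have hnn1 := hf.2.2 a b hab
      have hnn2 := hf.2.2 b a hab.symm
      by_cases haU : a ∈ U <;> by_cases hbU : b ∈ U <;>
        simp only [haU, hbU, if_true, if_false] <;> linarith
    have hcard : ∑ p ∈ pairsTouch G S U,
        ((if p.1 ∈ U then α p.1 p.2 else 0) + (if p.2 ∈ U then α p.2 p.1 else 0))
        ≤ ((pairsTouch G S U).card : ℝ) := by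
      calc _ ≤ ∑ _p ∈ pairsTouch G S U, (1 : ℝ) := Finset.sum_le_sum hpt
      _ = _ := by simp
    rw [sum_g_eq G α S U hUS, pairsTouch_card_real] at hcard
    rw [← h2] at hcard
    linarith
end DirB

/-- in an optimal CP solution, `r u` equals the compact number of `u`. -/
theorem cp_optimal_r_eq_compactNum (G : SimpleGraph V) [DecidableRel G.Adj]
    (r : V → ℝ) (α : V → V → ℝ) (hopt : CPOptimal G r α) :
    ∀ u : V, r u = compactNum G u := by
  intro u
  obtain ⟨S, huS, hcS⟩ := exists_compact_of_opt G r α hopt u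
  have hmem : r u ∈ {ρ : ℝ | ∃ S : Finset V, u ∈ S ∧ IsCompactSub G ρ S} := ⟨S, huS, hcS⟩
  have hub : ∀ ρ ∈ {ρ : ℝ | ∃ S : Finset V, u ∈ S ∧ IsCompactSub G ρ S}, ρ ≤ r u := by
    rintro ρ ⟨S', hu', hc'⟩
    exact compact_le_r G r α hopt hc' hu'
  rw [compactNum]
  exact le_antisymm (le_csSup ⟨r u, hub⟩ hmem) (csSup_le ⟨r u, hmem⟩ hub)
end

section
/- If vertex u has an edge (u,v) ∈ E such that a valid lower bound on φ(v) strictly exceeds a valid upper bound on φ(u) (i.e., φ(v) > φ(u)), then u is not contained in any locally densest subgraph of G. -/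
open Finset

variable {V : Type*} [Fintype V] [DecidableEq V]

/-!
Let `S` be an LDS containing `u` and let `T ∋ v` be `ρ`-compact with `ρ > φ(u) ≥ density S`; then
`u ∉ T`. If `T ⊂ S`, peeling `S \ T` off `S` costs `≥ density S · |S \ T|` edges, while the
`|E(T)| ≥ ρ |T|` edges left exceed `density S · |T|`, too many in total. Otherwise `S ∪ T` is
connected through the edge `uv`, and since removal costs add up over `S` and `T` it is again
`density S`-compact, contradicting the maximality of `S`.
-/

section EdgeCount

variable (G : SimpleGraph V) [DecidableRel G.Adj]

lemma edgeCount_mono {A B : Finset V} (h : A ⊆ B) : edgeCount G A ≤ edgeCount G B :=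
  card_le_card <| monotone_filter_right _ fun _ _ hA x hx => h (hA x hx)

lemma edgeCount_le_card_edgeFinset (A : Finset V) : edgeCount G A ≤ #G.edgeFinset :=
  card_filter_le _ _

lemma edgeCount_add_edgeCount_le (A B : Finset V) :
    edgeCount G A + edgeCount G B ≤ edgeCount G (A ∪ B) + edgeCount G (A ∩ B) := by
  unfold edgeCount
  rw [← card_union_add_card_inter, ← filter_and]
  gcongr with e
  · exact union_subset (monotone_filter_right _ fun _ _ h x hx => mem_union_left _ (h x hx))
      (monotone_filter_right _ fun _ _ h x hx => mem_union_right _ (h x hx))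
  · exact fun h x hx => mem_inter.mpr ⟨h.1 x hx, h.2 x hx⟩

/-- The number of edges of `G[A]` meeting `X` is monotone in `A` (stated additively to avoid
truncated subtraction). -/
lemma edgeCount_add_edgeCount_sdiff_le {A B : Finset V} (hAB : A ⊆ B) (X : Finset V) :
    edgeCount G A + edgeCount G (B \ X) ≤ edgeCount G B + edgeCount G (A \ X) := by
  have hunion : A ∪ B \ X ⊆ B := union_subset hAB sdiff_subset
  have hinter : A ∩ (B \ X) = A \ X := by
    ext x; simp only [mem_inter, mem_sdiff]; have := @hAB x; tauto
  calc edgeCount G A + edgeCount G (B \ X)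
      ≤ edgeCount G (A ∪ B \ X) + edgeCount G (A ∩ (B \ X)) := edgeCount_add_edgeCount_le G _ _
    _ ≤ edgeCount G B + edgeCount G (A \ X) := by
      rw [hinter]; exact Nat.add_le_add_right (edgeCount_mono G hunion) _

end EdgeCount

namespace IsCompactSub

variable {G : SimpleGraph V} [DecidableRel G.Adj] {ρ ρ' : ℝ} {S T : Finset V}

lemma nonempty (h : IsCompactSub G ρ S) : S.Nonempty := by
  obtain ⟨⟨x, hx⟩⟩ := h.2.1.nonempty
  exact ⟨x, hx⟩

lemma mul_card_le_edgeCount_sub (h : IsCompactSub G ρ S) {X : Finset V} (hX : X ⊆ S) :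
    ρ * #X ≤ (edgeCount G S : ℝ) - edgeCount G (S \ X) := by
  rcases X.eq_empty_or_nonempty with rfl | hne
  · simp
  · exact h.2.2 X hX hne

lemma mul_card_le_edgeCount (h : IsCompactSub G ρ S) : ρ * #S ≤ edgeCount G S := by
  have : (0 : ℝ) ≤ edgeCount G (S \ S) := Nat.cast_nonneg _
  linarith [h.mul_card_le_edgeCount_sub subset_rfl]

lemma le_card_edgeFinset (h : IsCompactSub G ρ S) : ρ ≤ #G.edgeFinset := by
  have hcard : (1 : ℝ) ≤ #S := by exact_mod_cast h.nonempty.card_pos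
  have hE : (edgeCount G S : ℝ) ≤ #G.edgeFinset := by
    exact_mod_cast edgeCount_le_card_edgeFinset G S
  nlinarith [h.1, h.mul_card_le_edgeCount]

lemma anti (h : IsCompactSub G ρ' S) (hρ : 0 ≤ ρ) (hρρ' : ρ ≤ ρ') : IsCompactSub G ρ S :=
  ⟨hρ, h.2.1, fun U hU hne => le_trans (by gcongr) (h.2.2 U hU hne)⟩

/-- Removing `U` from `S ∪ T` costs at least as many edges as removing `U \ T` from `S` and then
`U ∩ T` from `T`, by monotonicity of the edges meeting a fixed set. -/
lemma union (hS : IsCompactSub G ρ S) (hT : IsCompactSub G ρ T)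
    (hconn : (G.induce ((S ∪ T : Finset V) : Set V)).Connected) :
    IsCompactSub G ρ (S ∪ T) := by
  refine ⟨hS.1, hconn, fun U hU hne => ?_⟩
  have hUS : U \ T ⊆ S := fun x hx =>
    (mem_union.mp (hU (mem_sdiff.mp hx).1)).resolve_right (mem_sdiff.mp hx).2
  have hTW : T ⊆ (S ∪ T) \ (U \ T) := fun x hx => by simp [hx]
  have hrest : ((S ∪ T) \ (U \ T)) \ (U ∩ T) = (S ∪ T) \ U := by ext; simp; tauto
  have h₁ : (edgeCount G S : ℝ) + edgeCount G ((S ∪ T) \ (U \ T))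
      ≤ edgeCount G (S ∪ T) + edgeCount G (S \ (U \ T)) := by
    exact_mod_cast edgeCount_add_edgeCount_sdiff_le G subset_union_left (U \ T)
  have h₂ : (edgeCount G T : ℝ) + edgeCount G ((S ∪ T) \ U)
      ≤ edgeCount G ((S ∪ T) \ (U \ T)) + edgeCount G (T \ (U ∩ T)) := by
    rw [← hrest]; exact_mod_cast edgeCount_add_edgeCount_sdiff_le G hTW (U ∩ T)
  have hcard : (#U : ℝ) = #(U \ T) + #(U ∩ T) := by
    exact_mod_cast (card_sdiff_add_card_inter U T).symm
  have hcostS := hS.mul_card_le_edgeCount_sub hUS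
  have hcostT := hT.mul_card_le_edgeCount_sub (inter_subset_right : U ∩ T ⊆ T)
  rw [hcard]
  linarith

lemma le_density_of_ssubset (hS : IsCompactSub G (density G S) S) (hT : IsCompactSub G ρ T)
    (hTS : T ⊂ S) : ρ ≤ density G S := by
  have hST := hS.mul_card_le_edgeCount_sub (sdiff_subset : S \ T ⊆ S)
  rw [Finset.sdiff_sdiff_eq_self hTS.subset] at hST
  have hT' := hT.mul_card_le_edgeCount
  have hcard : (#(S \ T) : ℝ) + #T = #S := by exact_mod_cast card_sdiff_add_card_eq_card hTS.subset
  have hSpos : (0 : ℝ) < #S := by exact_mod_cast hS.nonempty.card_pos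
  have hdens : density G S * #S = edgeCount G S := div_mul_cancel₀ _ hSpos.ne'
  have hTpos : (0 : ℝ) < #T := by exact_mod_cast hT.nonempty.card_pos
  refine le_of_mul_le_mul_right ?_ hTpos
  linear_combination hT' + hST - hdens - density G S * hcard

end IsCompactSub

section CompactNum

variable (G : SimpleGraph V) [DecidableRel G.Adj]

lemma isCompactSub_zero_singleton (v : V) : IsCompactSub G 0 {v} := by
  refine ⟨le_rfl, ?_, fun U _ _ => ?_⟩
  · rw [coe_singleton, SimpleGraph.induce_singleton_eq_top]
    exact SimpleGraph.connected_top
  · have := edgeCount_mono G (sdiff_subset : {v} \ U ⊆ {v})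
    rw [zero_mul, sub_nonneg]
    exact_mod_cast this

lemma bddAbove_setOf_isCompactSub (u : V) :
    BddAbove {ρ : ℝ | ∃ S : Finset V, u ∈ S ∧ IsCompactSub G ρ S} :=
  ⟨#G.edgeFinset, by rintro _ ⟨_, _, h⟩; exact h.le_card_edgeFinset⟩

variable {G}

lemma IsCompactSub.le_compactNum {ρ : ℝ} {S : Finset V} {u : V} (h : IsCompactSub G ρ S)
    (hu : u ∈ S) : ρ ≤ compactNum G u :=
  le_csSup (bddAbove_setOf_isCompactSub G u) ⟨S, hu, h⟩

lemma exists_isCompactSub_of_lt_compactNum {r : ℝ} {v : V} (hr : r < compactNum G v) :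
    ∃ ρ > r, ∃ T : Finset V, v ∈ T ∧ IsCompactSub G ρ T := by
  have hne : {ρ : ℝ | ∃ T : Finset V, v ∈ T ∧ IsCompactSub G ρ T}.Nonempty :=
    ⟨0, {v}, mem_singleton_self v, isCompactSub_zero_singleton G v⟩
  obtain ⟨ρ, ⟨T, hvT, hT⟩, hρ⟩ := exists_lt_of_lt_csSup hne hr
  exact ⟨ρ, hρ, T, hvT, hT⟩

end CompactNum

/-- Pruning rule 1: if `u` has a neighbor `v` with strictly
larger compact number, then `u` is in no LDS. -/
theorem pruning_rule_one (G : SimpleGraph V) [DecidableRel G.Adj]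
    (u v : V) (hadj : G.Adj u v) (hlt : compactNum G v > compactNum G u) :
    ∀ S : Finset V, IsLDS G S → u ∉ S := by
  rintro S ⟨hS, hmax⟩ huS
  obtain ⟨ρ, hρ, T, hvT, hT⟩ := exists_isCompactSub_of_lt_compactNum hlt
  have hdens : density G S < ρ := (hS.le_compactNum huS).trans_lt hρ
  have huT : u ∉ T := fun huT => (hT.le_compactNum huT).not_gt hρ
  by_cases hTS : T ⊆ S
  · have hTS' : T ⊂ S := ssubset_of_subset_of_ne hTS (by rintro rfl; exact huT huS)
    exact (hS.le_density_of_ssubset hT hTS').not_gt hdens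
  · have hconn : (G.induce ((S ∪ T : Finset V) : Set V)).Connected := by
      rw [coe_union]
      exact SimpleGraph.connected_induce_union hS.2.1.preconnected hT.2.1.preconnected
        huS hvT hadj
    exact hmax (S ∪ T) (left_lt_sup.mpr hTS) (hS.union (hT.anti hS.1 hdens.le) hconn)
end

section
/- For every vertex u in a graph G, the compact number φ(u) is at most the core number core_G(u): φ(u) ≤ core_G(u). -/
/-!
Deleting one vertex `v` from a ρ-compact `S` removes at most `deg_S v` edges, so every vertex of
`S` has degree at least `ρ` in `G[S]`; hence `S` witnesses `⌈ρ⌉ ≤ core(u)` for each `u ∈ S`.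
-/

open Finset

variable {V : Type*} [Fintype V] [DecidableEq V]

/-- The core number of `u`: the largest `k` such that `u` belongs to an induced
subgraph of minimum degree at least `k`. -/
noncomputable def coreNum (G : SimpleGraph V) [DecidableRel G.Adj] (u : V) : ℕ :=
  sSup {k : ℕ | ∃ S : Finset V, u ∈ S ∧ ∀ v ∈ S, k ≤ (S.filter (G.Adj v)).card}

lemma edgeCount_le_edgeCount_sdiff_singleton_add (G : SimpleGraph V) [DecidableRel G.Adj]
    (S : Finset V) (v : V) :
    edgeCount G S ≤ edgeCount G (S \ {v}) + #(S.filter (G.Adj v)) := by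
  have hcover : (G.edgeFinset.filter fun e => ∀ x ∈ e, x ∈ S) ⊆
      (G.edgeFinset.filter fun e => ∀ x ∈ e, x ∈ S \ {v}) ∪
        (S.filter (G.Adj v)).image (s(v, ·)) := by
    intro e
    induction e using Sym2.ind with
    | _ a b =>
      simp only [mem_filter, SimpleGraph.mem_edgeFinset, SimpleGraph.mem_edgeSet, Sym2.mem_iff,
        forall_eq_or_imp, forall_eq, mem_union, mem_sdiff, mem_singleton, mem_image]
      rintro ⟨hab, ha, hb⟩
      by_cases hva : a = v
      · subst hva
        exact Or.inr ⟨b, ⟨hb, hab⟩, rfl⟩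
      by_cases hvb : b = v
      · subst hvb
        exact Or.inr ⟨a, ⟨ha, hab.symm⟩, Sym2.eq_swap⟩
      exact Or.inl ⟨hab, ⟨ha, hva⟩, hb, hvb⟩
  calc edgeCount G S
      ≤ #((G.edgeFinset.filter fun e => ∀ x ∈ e, x ∈ S \ {v}) ∪
          (S.filter (G.Adj v)).image (s(v, ·))) := card_le_card hcover
    _ ≤ edgeCount G (S \ {v}) + #((S.filter (G.Adj v)).image (s(v, ·))) := card_union_le _ _
    _ ≤ edgeCount G (S \ {v}) + #(S.filter (G.Adj v)) := by gcongr; exact card_image_le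

lemma IsCompactSub.le_card_filter_adj {G : SimpleGraph V} [DecidableRel G.Adj] {ρ : ℝ}
    {S : Finset V} (hS : IsCompactSub G ρ S) {v : V} (hv : v ∈ S) :
    ρ ≤ #(S.filter (G.Adj v)) := by
  have hremove := hS.2.2 {v} (singleton_subset_iff.2 hv) (singleton_nonempty v)
  have hcount : (edgeCount G S : ℝ) ≤ edgeCount G (S \ {v}) + #(S.filter (G.Adj v)) := by
    exact_mod_cast edgeCount_le_edgeCount_sdiff_singleton_add G S v
  rw [card_singleton, Nat.cast_one, mul_one] at hremove
  linarith

lemma le_coreNum {W : Type*} [Fintype W] {G : SimpleGraph W} [DecidableRel G.Adj] {u : W}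
    {S : Finset W} {k : ℕ} (hu : u ∈ S) (hdeg : ∀ v ∈ S, k ≤ #(S.filter (G.Adj v))) :
    k ≤ coreNum G u := by
  refine le_csSup ⟨Fintype.card W, ?_⟩ ⟨S, hu, hdeg⟩
  rintro k ⟨T, huT, hT⟩
  exact (hT u huT).trans ((card_filter_le _ _).trans (card_le_univ T))

/-- the compact number is at most the core number. -/
theorem compactNum_le_coreNum (G : SimpleGraph V) [DecidableRel G.Adj] (u : V) :
    compactNum G u ≤ (coreNum G u : ℝ) := by
  refine Real.sSup_le ?_ (Nat.cast_nonneg _)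
  rintro ρ ⟨S, hu, hS⟩
  have hceil : ⌈ρ⌉₊ ≤ coreNum G u :=
    le_coreNum hu fun v hv => Nat.ceil_le.2 (hS.le_card_filter_adj hv)
  calc ρ ≤ ⌈ρ⌉₊ := Nat.le_ceil ρ
    _ ≤ coreNum G u := by exact_mod_cast hceil
end

section
/- In any feasible solution (r, α) to CP(G), the maximum r-value satisfies max_{u∈V} r_u ≥ density(G[S]) for every nonempty S ⊆ V; consequently max_u r_u is at least the maximum subgraph density of G. -/
open Finset

variable {V : Type*} [Fintype V] [DecidableEq V]

lemma key (G : SimpleGraph V) [DecidableRel G.Adj] (r : V → ℝ) (α : V → V → ℝ)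
    (hr : ∀ u, r u = ∑ v ∈ G.neighborFinset u, α u v)
    (h1 : ∀ u v, G.Adj u v → 1 ≤ α u v + α v u)
    (h0 : ∀ u v, G.Adj u v → 0 ≤ α u v) (S : Finset V) :
    (edgeCount G S : ℝ) ≤ ∑ u ∈ S, r u := by
  set P : Finset (V × V) := (S ×ˢ S).filter (fun p => G.Adj p.1 p.2) with hP
  have hmem : ∀ p : V × V, p ∈ P ↔ p.1 ∈ S ∧ p.2 ∈ S ∧ G.Adj p.1 p.2 := by
    intro p; simp [hP, and_assoc]
  -- step 1 : ∑ p ∈ P, α ≤ ∑ u ∈ S, r u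
  have step1 : ∑ p ∈ P, α p.1 p.2 ≤ ∑ u ∈ S, r u := by
    have : ∑ p ∈ P, α p.1 p.2 = ∑ u ∈ S, ∑ v ∈ S.filter (fun v => G.Adj u v), α u v := by
      rw [hP, Finset.sum_filter, Finset.sum_product]
      simp [Finset.sum_filter]
    rw [this]
    apply Finset.sum_le_sum
    intro u hu
    rw [hr u]
    apply Finset.sum_le_sum_of_subset_of_nonneg
    · intro v hv
      simp only [Finset.mem_filter] at hv
      simpa using hv.2
    · intro v hv _
      exact h0 u v (by simpa using hv)
  -- step 2: group by edge
  have maps : ∀ p ∈ P, Sym2.mk p.1 p.2 ∈ G.edgeFinset.filter fun e => ∀ v ∈ e, v ∈ S := by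
    intro p hp
    rw [hmem] at hp
    simp only [Finset.mem_filter, SimpleGraph.mem_edgeFinset]
    refine ⟨hp.2.2, ?_⟩
    intro v hv
    rcases Sym2.mem_iff.mp hv with h | h <;> subst h
    · exact hp.1
    · exact hp.2.1
  have step2 : (edgeCount G S : ℝ) ≤ ∑ p ∈ P, α p.1 p.2 := by
    rw [← Finset.sum_fiberwise_of_maps_to maps (fun p => α p.1 p.2)]
    unfold edgeCount
    rw [Finset.card_eq_sum_ones]
    push_cast
    apply Finset.sum_le_sum
    intro e he
    induction e using Sym2.ind with
    | _ u v =>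
      simp only [Finset.mem_filter, SimpleGraph.mem_edgeFinset] at he
      have hadj : G.Adj u v := he.1
      have huS : u ∈ S := he.2 u (Sym2.mem_mk_left u v)
      have hvS : v ∈ S := he.2 v (Sym2.mem_mk_right u v)
      have hne : u ≠ v := hadj.ne
      have hfib : P.filter (fun p => Sym2.mk p.1 p.2 = s(u, v)) = {(u, v), (v, u)} := by
        ext ⟨a, b⟩
        simp only [Finset.mem_filter, hmem, Finset.mem_insert, Finset.mem_singleton,
          Sym2.eq_iff, Prod.mk.injEq]
        constructor
        · rintro ⟨_, (⟨rfl, rfl⟩ | ⟨rfl, rfl⟩)⟩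
          · left; exact ⟨rfl, rfl⟩
          · right; exact ⟨rfl, rfl⟩
        · rintro (⟨rfl, rfl⟩ | ⟨rfl, rfl⟩)
          · exact ⟨⟨huS, hvS, hadj⟩, Or.inl ⟨rfl, rfl⟩⟩
          · exact ⟨⟨hvS, huS, hadj.symm⟩, Or.inr ⟨rfl, rfl⟩⟩
      rw [hfib]
      rw [Finset.sum_pair (by simp [hne, hne.symm] : ((u,v) : V × V) ≠ (v,u))]
      exact h1 u v hadj
  linarith

/-- in a feasible CP solution, the maximum r-value is at least
the density of every induced subgraph. -/
theorem cp_feasible_max_ge_density (G : SimpleGraph V) [DecidableRel G.Adj]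
    [Nonempty V] (r : V → ℝ) (α : V → V → ℝ) (hfeas : CPFeasible G r α) :
    ∀ S : Finset V, S.Nonempty →
      density G S ≤ Finset.univ.sup' Finset.univ_nonempty r := by
  intro S hS
  obtain ⟨hr, h1, h0⟩ := hfeas
  have hkey := key G r α hr h1 h0 S
  set M := Finset.univ.sup' Finset.univ_nonempty r with hM
  have hsum : ∑ u ∈ S, r u ≤ (S.card : ℝ) * M := by
    calc ∑ u ∈ S, r u ≤ ∑ _u ∈ S, M :=
          Finset.sum_le_sum fun u _ => Finset.le_sup' r (Finset.mem_univ u)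
      _ = (S.card : ℝ) * M := by rw [Finset.sum_const, nsmul_eq_mul]
  have hcard : (0 : ℝ) < (S.card : ℝ) := by
    exact_mod_cast Finset.card_pos.mpr hS
  rw [density, div_le_iff₀ hcard]
  calc (edgeCount G S : ℝ) ≤ ∑ u ∈ S, r u := hkey
    _ ≤ (S.card : ℝ) * M := hsum
    _ = M * (S.card : ℝ) := mul_comm _ _
end

section
/- Let (r*, α*) be an optimal solution to the triangle convex program CP_tr(G): minimize Σ_u r_u² subject to r_u = Σ_{t∈T: u∈t} α_{u,t}, Σ_{u∈t} α_{u,t} = 1 and α_{u,t} ≥ 0 for every triangle t. Then for every triangle t = (a,b,c) with r*_a > r*_c and r*_b > r*_c, we have α*_{c,t} = 1. -/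
/-!
Moving a weight `ε` of a triangle from its vertex `x` to its vertex `c` lowers `r_x` by `ε`,
raises `r_c` by `ε`, and so changes `∑ r_u²` by `-2ε(r_x - r_c - ε)`, which is negative for
`0 < ε < r_x - r_c`. Hence an optimal solution gives no weight of a triangle to a vertex whose
load exceeds that of another vertex of the same triangle; if `r_a, r_b > r_c`, the whole unit of
the triangle `{a, b, c}` goes to `c`.
-/

open Finset

variable {V : Type*} [Fintype V] [DecidableEq V]

/-- The set of triangles (3-cliques) of `G`, as 3-element vertex sets. -/
def triFinset (G : SimpleGraph V) [DecidableRel G.Adj] : Finset (Finset V) :=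
  Finset.univ.filter fun t => t.card = 3 ∧ ∀ u ∈ t, ∀ v ∈ t, u ≠ v → G.Adj u v

/-- Number of triangles of `G` with all vertices in `S`. -/
def triCount (G : SimpleGraph V) [DecidableRel G.Adj] (S : Finset V) : ℕ :=
  ((triFinset G).filter fun t => t ⊆ S).card

/-- Triangle density |T(G[S])|/|S|. -/
noncomputable def trDensity (G : SimpleGraph V) [DecidableRel G.Adj] (S : Finset V) : ℝ :=
  (triCount G S : ℝ) / (S.card : ℝ)

/-- `G[S]` is ρ-tr-compact: connected, and removing any nonempty `U ⊆ S`
removes at least `ρ * |U|` triangles. -/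
def IsTrCompactSub (G : SimpleGraph V) [DecidableRel G.Adj] (ρ : ℝ) (S : Finset V) : Prop :=
  0 ≤ ρ ∧ (G.induce (S : Set V)).Connected ∧
  ∀ U ⊆ S, U.Nonempty →
    ρ * (U.card : ℝ) ≤ (triCount G S : ℝ) - (triCount G (S \ U) : ℝ)

/-- `G[S]` is a locally triangle-densest subgraph. -/
def IsLTDS (G : SimpleGraph V) [DecidableRel G.Adj] (S : Finset V) : Prop :=
  IsTrCompactSub G (trDensity G S) S ∧
  ∀ S' : Finset V, S ⊂ S' → ¬ IsTrCompactSub G (trDensity G S) S'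

/-- The triangle-compact number of `u`. -/
noncomputable def trCompactNum (G : SimpleGraph V) [DecidableRel G.Adj] (u : V) : ℝ :=
  sSup {ρ : ℝ | ∃ S : Finset V, u ∈ S ∧ IsTrCompactSub G ρ S}

/-- Feasibility for the triangle convex program CP_tr(G). -/
def CPtrFeasible (G : SimpleGraph V) [DecidableRel G.Adj]
    (r : V → ℝ) (α : V → Finset V → ℝ) : Prop :=
  (∀ u, r u = ∑ t ∈ (triFinset G).filter (fun t => u ∈ t), α u t) ∧
  (∀ t ∈ triFinset G, ∑ u ∈ t, α u t = 1) ∧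
  (∀ t ∈ triFinset G, ∀ u ∈ t, 0 ≤ α u t)

/-- Optimality for CP_tr(G). -/
def CPtrOptimal (G : SimpleGraph V) [DecidableRel G.Adj]
    (r : V → ℝ) (α : V → Finset V → ℝ) : Prop :=
  CPtrFeasible G r α ∧
  ∀ r' α', CPtrFeasible G r' α' → ∑ u, (r u) ^ 2 ≤ ∑ u, (r' u) ^ 2

theorem sum_sq_add_single_sub_single {ι : Type*} [Fintype ι] [DecidableEq ι]
    (r : ι → ℝ) {x c : ι} (hxc : x ≠ c) (ε : ℝ) :
    ∑ u, (r + Pi.single c ε - Pi.single x ε : ι → ℝ) u ^ 2 =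
      ∑ u, r u ^ 2 - 2 * ε * (r x - r c - ε) := by
  have hsplit : ∀ u, (r + Pi.single c ε - Pi.single x ε : ι → ℝ) u ^ 2 =
      r u ^ 2 + (Pi.single c (2 * ε * r c + ε ^ 2) : ι → ℝ) u
        - (Pi.single x (2 * ε * r x - ε ^ 2) : ι → ℝ) u := by
    intro u
    by_cases hux : u = x
    · subst hux; simp [hxc]; ring
    · by_cases huc : u = c
      · subst huc; simp [hux]; ring
      · simp [hux, huc]
  simp only [hsplit, Finset.sum_sub_distrib, Finset.sum_add_distrib, Finset.sum_pi_single',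
    Finset.mem_univ, if_true]
  ring

section Transfer

variable (G : SimpleGraph V) [DecidableRel G.Adj]

def triLoad (α : V → Finset V → ℝ) (u : V) : ℝ :=
  ∑ t ∈ (triFinset G).filter (fun t => u ∈ t), α u t

variable {G}

theorem CPtrFeasible.eq_triLoad {r : V → ℝ} {α : V → Finset V → ℝ} (h : CPtrFeasible G r α) :
    r = triLoad G α :=
  funext h.1

theorem triLoad_add (α β : V → Finset V → ℝ) : triLoad G (α + β) = triLoad G α + triLoad G β := by
  funext u; simp [triLoad, Finset.sum_add_distrib]

theorem triLoad_sub (α β : V → Finset V → ℝ) : triLoad G (α - β) = triLoad G α - triLoad G β := by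
  funext u; simp [triLoad, Finset.sum_sub_distrib]

theorem triLoad_single_single {t : Finset V} (ht : t ∈ triFinset G) {v : V} (hv : v ∈ t) (ε : ℝ) :
    triLoad G (Pi.single v (Pi.single t ε)) = Pi.single v ε := by
  funext u
  by_cases huv : u = v
  · subst huv; simp [triLoad, Finset.sum_pi_single', ht, hv]
  · simp [triLoad, huv]

def transferWeight (α : V → Finset V → ℝ) (t : Finset V) (x c : V) (ε : ℝ) :
    V → Finset V → ℝ :=
  α + Pi.single c (Pi.single t ε) - Pi.single x (Pi.single t ε)

variable {α : V → Finset V → ℝ} {t : Finset V} {x c : V}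

theorem triLoad_transferWeight (ht : t ∈ triFinset G) (hx : x ∈ t) (hc : c ∈ t) (ε : ℝ) :
    triLoad G (transferWeight α t x c ε) = triLoad G α + Pi.single c ε - Pi.single x ε := by
  rw [transferWeight, triLoad_sub, triLoad_add, triLoad_single_single ht hc,
    triLoad_single_single ht hx]

theorem CPtrFeasible.transferWeight {r : V → ℝ} (h : CPtrFeasible G r α) (ht : t ∈ triFinset G)
    (hx : x ∈ t) (hc : c ∈ t) {ε : ℝ} (hε : 0 ≤ ε) (hεα : ε ≤ α x t) :
    CPtrFeasible G (r + Pi.single c ε - Pi.single x ε) (transferWeight α t x c ε) := by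
  refine ⟨fun u => ?_, fun s hs => ?_, fun s hs u hu => ?_⟩
  · show _ = triLoad G _ u
    rw [triLoad_transferWeight ht hx hc, ← h.eq_triLoad]
  · have hsum := h.2.1 s hs
    simp only [_root_.transferWeight, Pi.add_apply, Pi.sub_apply, Finset.sum_add_distrib,
      Finset.sum_sub_distrib, ← Finset.sum_apply, Finset.sum_pi_single'] at hsum ⊢
    by_cases hst : s = t
    · subst hst; simp [hx, hc, hsum]
    · simp [ite_apply, hst, hsum]
  · have := h.2.2 s hs u hu
    simp only [_root_.transferWeight, Pi.add_apply, Pi.sub_apply, Pi.single_apply, ite_apply,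
      Pi.zero_apply]
    split_ifs <;> subst_vars <;> linarith

end Transfer

theorem CPtrOptimal.weight_eq_zero_of_lt {G : SimpleGraph V} [DecidableRel G.Adj] {r : V → ℝ}
    {α : V → Finset V → ℝ} (hopt : CPtrOptimal G r α) {t : Finset V} (ht : t ∈ triFinset G)
    {x c : V} (hx : x ∈ t) (hc : c ∈ t) (hrc : r c < r x) : α x t = 0 := by
  obtain ⟨hfeas, hmin⟩ := hopt
  have hxc : x ≠ c := by rintro rfl; exact lt_irrefl _ hrc
  by_contra hne
  have hpos : 0 < α x t := (hfeas.2.2 t ht x hx).lt_of_ne' hne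
  set ε := min (α x t) ((r x - r c) / 2)
  have hε : 0 < ε := lt_min hpos (by linarith)
  have hεr : ε ≤ (r x - r c) / 2 := min_le_right _ _
  have hle := hmin _ _ (hfeas.transferWeight ht hx hc hε.le (min_le_left _ _))
  rw [sum_sq_add_single_sub_single r hxc] at hle
  nlinarith

/-- in an optimal CP_tr solution, a triangle gives all its weight
to its vertex of strictly smallest r-value. -/
theorem cptr_optimal_alpha_one (G : SimpleGraph V) [DecidableRel G.Adj]
    (r : V → ℝ) (α : V → Finset V → ℝ) (hopt : CPtrOptimal G r α) :
    ∀ a b c : V, ({a, b, c} : Finset V) ∈ triFinset G →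
      r a > r c → r b > r c → α c {a, b, c} = 1 := by
  intro a b c ht hac hbc
  have hc : c ∈ ({a, b, c} : Finset V) := by simp
  have hzero : ∀ u ∈ ({a, b, c} : Finset V), u ≠ c → α u {a, b, c} = 0 := by
    intro u hu huc
    have hcu : r c < r u := by
      simp only [Finset.mem_insert, Finset.mem_singleton] at hu
      rcases hu with rfl | rfl | rfl
      exacts [hac, hbc, absurd rfl huc]
    exact hopt.weight_eq_zero_of_lt ht hu hc hcu
  exact (Finset.sum_eq_single_of_mem c hc hzero).symm.trans (hopt.1.2.1 _ ht)
end

section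
/- Let (r*, α*) be an optimal solution to the triangle convex program CP_tr(G). For a vertex u, let X = {v : r*_v > r*_u} and Y = {v : r*_v = r*_u}. Then removing any nonempty subset Q ⊆ X ∪ Y from G[X ∪ Y] removes at least r*_u · |Q| triangles of G[X ∪ Y]. -/
open Finset

variable {V : Type*} [Fintype V] [DecidableEq V]

/-!
At an optimum no triangle can profitably shift weight from a vertex to a vertex of smaller load,
so a vertex `v` only charges triangles whose other vertices have load at least `r v`. Hence the
vertices of `Q ⊆ {r ≥ r u}` charge only triangles of `G[{r ≥ r u}]` meeting `Q`, each of which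
carries total weight at most one, and `r u * |Q| ≤ ∑_{v ∈ Q} r v` is at most the number of them.
-/

namespace CPtrFeasible

variable {G : SimpleGraph V} [DecidableRel G.Adj] {r : V → ℝ} {α : V → Finset V → ℝ}

theorem add_shift (h : CPtrFeasible G r α) {t : Finset V} (ht : t ∈ triFinset G) (δ : V → ℝ)
    (hδ : ∀ x ∉ t, δ x = 0) (hδsum : ∑ x ∈ t, δ x = 0) (hnn : ∀ x ∈ t, 0 ≤ α x t + δ x) :
    CPtrFeasible G (r + δ) (fun x s => α x s + if s = t then δ x else 0) := by
  obtain ⟨hr, hsum, hα⟩ := h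
  refine ⟨fun x => ?_, fun s hs => ?_, fun s hs x hx => ?_⟩
  · rw [Finset.sum_add_distrib, ← hr, Pi.add_apply]
    by_cases hx : x ∈ t
    · simp [ht, hx]
    · simp [hδ x hx]
  · rw [Finset.sum_add_distrib, hsum s hs]
    split_ifs with hst
    · rw [hst, hδsum, add_zero]
    · simp
  · dsimp only
    split_ifs with hst
    · exact hst ▸ hnn x (hst ▸ hx)
    · simpa using hα s hs x hx

theorem sum_le_card (h : CPtrFeasible G r α) {Q : Finset V} {D : Finset (Finset V)}
    (hsupp : ∀ v ∈ Q, ∀ t ∈ triFinset G, v ∈ t → α v t ≠ 0 → t ∈ D)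
    (hD : D ⊆ triFinset G) :
    ∑ v ∈ Q, r v ≤ #D := by
  obtain ⟨hr, hsum, hα⟩ := h
  have hr_D : ∀ v ∈ Q, r v = ∑ t ∈ D.filter (v ∈ ·), α v t := by
    intro v hv
    rw [hr v]
    refine (Finset.sum_subset (filter_subset_filter (fun t => v ∈ t) hD) fun t ht htD => ?_).symm
    rw [mem_filter] at ht
    by_contra hne
    exact htD (mem_filter.2 ⟨hsupp v hv t ht.1 ht.2 hne, ht.2⟩)
  calc ∑ v ∈ Q, r v = ∑ v ∈ Q, ∑ t ∈ D.filter (v ∈ ·), α v t := Finset.sum_congr rfl hr_D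
    _ = ∑ t ∈ D, ∑ v ∈ t.filter (· ∈ Q), α v t :=
        Finset.sum_comm' fun v t => by simp only [mem_filter]; tauto
    _ ≤ ∑ t ∈ D, ∑ v ∈ t, α v t := Finset.sum_le_sum fun t ht =>
        Finset.sum_le_sum_of_subset_of_nonneg (filter_subset _ _) fun v hv _ => hα t (hD ht) v hv
    _ = #D := by
        rw [Finset.sum_congr rfl fun t ht => hsum t (hD ht)]
        simp

theorem transfer (h : CPtrFeasible G r α) {t : Finset V} (ht : t ∈ triFinset G) {v w : V}
    (hv : v ∈ t) (hw : w ∈ t) {ε : ℝ} (hε : 0 ≤ ε) (hεα : ε ≤ α v t) :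
    CPtrFeasible G (r + (Pi.single w ε - Pi.single v ε))
      (fun x s => α x s + if s = t then (Pi.single w ε - Pi.single v ε : V → ℝ) x else 0) := by
  refine h.add_shift ht _ (fun x hx => ?_) ?_ (fun x hx => ?_)
  · simp [(ne_of_mem_of_not_mem hv hx).symm, (ne_of_mem_of_not_mem hw hx).symm]
  · simp [Finset.sum_sub_distrib, Finset.sum_pi_single', hv, hw]
  · have hv_le : (Pi.single v ε : V → ℝ) x ≤ α x t := by
      rcases eq_or_ne x v with rfl | hxv
      · simpa using hεα
      · simpa [hxv] using h.2.2 t ht x hx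
    have hw_nonneg : 0 ≤ (Pi.single w ε : V → ℝ) x :=
      Pi.single_nonneg (α := fun _ : V => ℝ) |>.2 hε x
    simp only [Pi.sub_apply]
    linarith

end CPtrFeasible

theorem sum_sq_add_single_sub_single_s18 (r : V → ℝ) {v w : V} (hvw : v ≠ w) (ε : ℝ) :
    ∑ x, (r + (Pi.single w ε - Pi.single v ε) : V → ℝ) x ^ 2 =
      ∑ x, r x ^ 2 - 2 * ε * (r v - r w - ε) := by
  have hdiff : ∑ x, ((r + (Pi.single w ε - Pi.single v ε) : V → ℝ) x ^ 2 - r x ^ 2) =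
      ((r v - ε) ^ 2 - r v ^ 2) + ((r w + ε) ^ 2 - r w ^ 2) := by
    rw [Fintype.sum_eq_add v w hvw fun x hx => by simp [hx.1, hx.2]]
    simp [hvw, hvw.symm, sub_eq_add_neg]
  rw [Finset.sum_sub_distrib] at hdiff
  linarith

theorem CPtrOptimal.le_of_ne_zero {G : SimpleGraph V} [DecidableRel G.Adj] {r : V → ℝ}
    {α : V → Finset V → ℝ} (hopt : CPtrOptimal G r α) {t : Finset V} (ht : t ∈ triFinset G)
    {v w : V} (hv : v ∈ t) (hw : w ∈ t) (hα : α v t ≠ 0) : r v ≤ r w := by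
  obtain ⟨hfeas, hmin⟩ := hopt
  by_contra! hlt
  have hvw : v ≠ w := fun h => (h ▸ hlt).false
  have hαpos : 0 < α v t := (hfeas.2.2 t ht v hv).lt_of_ne' hα
  set ε := min (α v t) ((r v - r w) / 2)
  have hε : 0 < ε := lt_min hαpos (by linarith)
  have hεr : ε ≤ (r v - r w) / 2 := min_le_right _ _
  have hle := hmin _ _ (hfeas.transfer ht hv hw hε.le (min_le_left _ _))
  rw [sum_sq_add_single_sub_single_s18 r hvw] at hle
  nlinarith

theorem triCount_sub_triCount_sdiff (G : SimpleGraph V) [DecidableRel G.Adj] (S Q : Finset V) :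
    (triCount G S : ℝ) - triCount G (S \ Q) =
      #((triFinset G).filter fun t => t ⊆ S ∧ ¬Disjoint t Q) := by
  have hsplit := card_filter_add_card_filter_not (s := (triFinset G).filter (· ⊆ S)) (Disjoint · Q)
  simp only [filter_filter] at hsplit
  simp only [triCount, subset_sdiff, ← hsplit]
  push_cast
  ring

/-- removing any nonempty `Q ⊆ X ∪ Y` removes at least
`r u * |Q|` triangles of `G[X ∪ Y]`. -/
theorem cptr_optimal_level_set_trcompact (G : SimpleGraph V) [DecidableRel G.Adj]
    (r : V → ℝ) (α : V → Finset V → ℝ) (hopt : CPtrOptimal G r α) (u : V) :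
    ∀ Q ⊆ Finset.univ.filter (fun v => r u ≤ r v), Q.Nonempty →
      r u * (Q.card : ℝ) ≤
        (triCount G (Finset.univ.filter (fun v => r u ≤ r v)) : ℝ) -
        (triCount G ((Finset.univ.filter (fun v => r u ≤ r v)) \ Q) : ℝ) := by
  intro Q hQS _
  set S := Finset.univ.filter (fun v => r u ≤ r v)
  have hcharged : ∀ v ∈ Q, ∀ t ∈ triFinset G, v ∈ t → α v t ≠ 0 →
      t ∈ (triFinset G).filter fun t => t ⊆ S ∧ ¬Disjoint t Q := by
    intro v hv t ht hvt hα
    have hvS : r u ≤ r v := (mem_filter.1 (hQS hv)).2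
    refine mem_filter.2 ⟨ht, fun w hw => ?_, not_disjoint_iff.2 ⟨v, hvt, hv⟩⟩
    exact mem_filter.2 ⟨mem_univ w, hvS.trans (hopt.le_of_ne_zero ht hvt hw hα)⟩
  calc r u * (Q.card : ℝ) = ∑ v ∈ Q, r u := by rw [sum_const, nsmul_eq_mul, mul_comm]
    _ ≤ ∑ v ∈ Q, r v := Finset.sum_le_sum fun v hv => (mem_filter.1 (hQS hv)).2
    _ ≤ _ := hopt.1.sum_le_card hcharged (filter_subset _ _)
    _ = _ := (triCount_sub_triCount_sdiff G S Q).symm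
end
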